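/- arXiv:2212.01833 — 7 statements merged into one kernel-verified Lean document; each statement's English description precedes it below -/
import Mathlib

section
/- For all real numbers a, b, y, the family k ↦ J_k(a)·sin(k·y + b), indexed by k ∈ ℤ, is summable, and its sum equals sin(a·sin(y) + b); that is, sin(a·sin(y) + b) = ∑_{k∈ℤ} J_k(a)·sin(k·y + b). -/
open Real

open MeasureTheory intervalIntegral

/-- Bessel function of the first kind of integer order `k`:
`J_k(a) = (1/π) ∫_0^π cos(k t − a sin t) dt`. -/
noncomputable def besselJ (k : ℤ) (a : ℝ) : ℝ :=
  (1 / π) * ∫ t in (0:ℝ)..π, Real.cos (k * t - a * Real.sin t)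

namespace SinExp

noncomputable def F (a b t : ℝ) : ℂ := Complex.exp ((a * Real.sin t + b : ℝ) * Complex.I)
noncomputable def F' (a b t : ℝ) : ℂ := ((a * Real.cos t : ℝ) * Complex.I) * F a b t
noncomputable def F'' (a b t : ℝ) : ℂ :=
  ((-(a * Real.sin t) : ℝ) * Complex.I) * F a b t + ((a * Real.cos t : ℝ) * Complex.I) * F' a b t

lemma hasDerivF (a b t : ℝ) : HasDerivAt (F a b) (F' a b t) t := by
  have h1 : HasDerivAt (fun t : ℝ => a * Real.sin t + b) (a * Real.cos t) t :=
    ((Real.hasDerivAt_sin t).const_mul a).add_const b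
  have h2 : HasDerivAt (fun t : ℝ => ((a * Real.sin t + b : ℝ) : ℂ) * Complex.I)
      (((a * Real.cos t : ℝ) : ℂ) * Complex.I) t := h1.ofReal_comp.mul_const Complex.I
  have h3 := h2.cexp
  have : F' a b t = F a b t * (((a * Real.cos t : ℝ) : ℂ) * Complex.I) := by
    rw [F']; ring
  rw [this]; exact h3

lemma hasDerivF' (a b t : ℝ) : HasDerivAt (F' a b) (F'' a b t) t := by
  have h1 : HasDerivAt (fun t : ℝ => a * Real.cos t) (-(a * Real.sin t)) t := by
    simpa [mul_comm, neg_mul, mul_neg] using (Real.hasDerivAt_cos t).const_mul a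
  have h2 : HasDerivAt (fun t : ℝ => ((a * Real.cos t : ℝ) : ℂ) * Complex.I)
      (((-(a * Real.sin t) : ℝ) : ℂ) * Complex.I) t := h1.ofReal_comp.mul_const Complex.I
  exact h2.mul (hasDerivF a b t)

lemma contF (a b : ℝ) : Continuous (F a b) := by
  unfold F; fun_prop

lemma contF' (a b : ℝ) : Continuous (F' a b) := by
  unfold F' F; fun_prop

lemma contF'' (a b : ℝ) : Continuous (F'' a b) := by
  unfold F'' F' F; fun_prop

lemma normF (a b t : ℝ) : ‖F a b t‖ = 1 := Complex.norm_exp_ofReal_mul_I _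

lemma normF'' (a b t : ℝ) : ‖F'' a b t‖ ≤ |a| + a ^ 2 := by
  have h1 : ‖((-(a * Real.sin t) : ℝ) * Complex.I : ℂ) * F a b t‖ ≤ |a| := by
    simp only [norm_mul, normF, Complex.norm_I, Complex.norm_real, Real.norm_eq_abs,
      mul_one, abs_neg, abs_mul]
    calc |a| * |Real.sin t| ≤ |a| * 1 := by
          gcongr; exact Real.abs_sin_le_one t
      _ = |a| := mul_one _
  have h2 : ‖((a * Real.cos t : ℝ) * Complex.I : ℂ) * F' a b t‖ ≤ a ^ 2 := by
    simp only [F', norm_mul, normF, Complex.norm_I, Complex.norm_real, Real.norm_eq_abs,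
      mul_one, abs_mul]
    calc |a| * |Real.cos t| * (|a| * |Real.cos t|) ≤ |a| * 1 * (|a| * 1) := by
          gcongr <;> exact Real.abs_cos_le_one t
      _ = a ^ 2 := by simp [← sq, sq_abs]
  calc ‖F'' a b t‖ ≤ _ + _ := norm_add_le _ _
    _ ≤ |a| + a ^ 2 := add_le_add h1 h2


lemma periodicF (a b : ℝ) : Function.Periodic (F a b) (2 * π) := fun t => by
  simp [F, Real.sin_add_two_pi]

noncomputable def cF (a b : ℝ) (n : ℤ) : ℂ := fourierCoeffOn Real.two_pi_pos (F a b) n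

lemma cF_eq_bessel (a b : ℝ) (n : ℤ) :
    cF a b n = Complex.exp ((b : ℝ) * Complex.I) * (besselJ n a : ℝ) := by
  set g : ℝ → ℂ := fun x => Complex.exp (((a * Real.sin x - n * x : ℝ) : ℂ) * Complex.I) with hg
  have hgc : Continuous g := by rw [hg]; fun_prop
  have key : ∀ x : ℝ, (fourier (-n) (x : AddCircle (2 * π - 0))) • F a b x
      = Complex.exp ((b : ℝ) * Complex.I) * g x := by
    intro x
    simp only [hg]
    rw [fourier_coe_apply, smul_eq_mul, F, ← Complex.exp_add, ← Complex.exp_add]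
    congr 1
    have hπ : (π : ℂ) ≠ 0 := Complex.ofReal_ne_zero.mpr Real.pi_ne_zero
    push_cast
    field_simp
    ring
  have hsub : (∫ x in (0:ℝ)..π, g (2*π - x)) = ∫ x in π..2*π, g x := by
    have h := intervalIntegral.integral_comp_sub_left (a := (0:ℝ)) (b := π) g (2*π)
    rw [sub_zero, show 2*π - π = π by ring] at h
    exact h
  have hI1 : IntervalIntegrable g volume 0 π := hgc.intervalIntegrable _ _
  have hI2 : IntervalIntegrable (fun x => g (2*π - x)) volume 0 π :=
    (hgc.comp (continuous_const.sub continuous_id)).intervalIntegrable _ _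
  have hsplit : (∫ x in (0:ℝ)..2*π, g x)
      = ∫ x in (0:ℝ)..π, (g x + g (2*π - x)) := by
    calc (∫ x in (0:ℝ)..2*π, g x) = (∫ x in (0:ℝ)..π, g x) + ∫ x in π..2*π, g x :=
          (integral_add_adjacent_intervals (hgc.intervalIntegrable _ _)
            (hgc.intervalIntegrable _ _)).symm
      _ = (∫ x in (0:ℝ)..π, g x) + ∫ x in (0:ℝ)..π, g (2*π - x) := by rw [hsub]
      _ = ∫ x in (0:ℝ)..π, (g x + g (2*π - x)) :=
          (intervalIntegral.integral_add hI1 hI2).symm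
  have hpt : ∀ x : ℝ, g x + g (2*π - x) = ((2 * Real.cos (n * x - a * Real.sin x) : ℝ) : ℂ) := by
    intro x
    have h1 : g (2*π - x) = Complex.exp (-(((a * Real.sin x - n * x : ℝ) : ℂ) * Complex.I)) := by
      simp only [hg]
      have : ((a * Real.sin (2*π - x) - n * (2*π - x) : ℝ) : ℂ) * Complex.I
          = -(((a * Real.sin x - n * x : ℝ) : ℂ) * Complex.I) + (-n : ℤ) * (2 * π * Complex.I) := by
        rw [Real.sin_two_pi_sub]
        push_cast
        ring
      rw [this, Complex.exp_add, Complex.exp_int_mul_two_pi_mul_I, mul_one]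
    rw [h1]
    simp only [hg]
    push_cast [Complex.ofReal_cos]
    set z : ℂ := (n:ℂ) * x - a * Complex.sin x with hzdef
    rw [show ((a:ℂ) * Complex.sin ↑x - (n:ℂ) * ↑x) * Complex.I = -z * Complex.I from by
        rw [hzdef]; ring,
      show -(-z * Complex.I) = z * Complex.I from by ring]
    linear_combination -Complex.two_cos z
  have hint : (∫ x in (0:ℝ)..2*π, g x) = ((2 * (π * besselJ n a) : ℝ) : ℂ) := by
    rw [hsplit]
    simp_rw [hpt]
    rw [intervalIntegral.integral_ofReal]
    norm_cast
    rw [besselJ]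
    rw [intervalIntegral.integral_const_mul]
    field_simp
  rw [cF, fourierCoeffOn_eq_integral]
  simp_rw [key]
  rw [intervalIntegral.integral_const_mul, hint]
  have hπ : (π:ℂ) ≠ 0 := Complex.ofReal_ne_zero.mpr Real.pi_ne_zero
  rw [Complex.real_smul]
  push_cast
  rw [sub_zero]
  field_simp

lemma F_boundary (a b : ℝ) : F a b (2*π) = F a b 0 := by
  have := periodicF a b 0
  simpa using this

lemma F'_boundary (a b : ℝ) : F' a b (2*π) = F' a b 0 := by
  rw [F', F', F_boundary, Real.cos_two_pi, Real.cos_zero]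

lemma ibp (G G' : ℝ → ℂ) (hbd : G (2*π) = G 0)
    (hderiv : ∀ x : ℝ, HasDerivAt G (G' x) x) (hcont' : Continuous G')
    {n : ℤ} (hn : n ≠ 0) :
    fourierCoeffOn Real.two_pi_pos G n
      = 1/(Complex.I * n) * fourierCoeffOn Real.two_pi_pos G' n := by
  rw [fourierCoeffOn_of_hasDerivAt Real.two_pi_pos hn (fun x _ => hderiv x)
    (hcont'.intervalIntegrable _ _)]
  rw [show G (2*π) - G 0 = 0 by rw [hbd, sub_self], mul_zero, zero_sub]
  have hπ : (π:ℂ) ≠ 0 := Complex.ofReal_ne_zero.mpr Real.pi_ne_zero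
  have hn' : (n:ℂ) ≠ 0 := Int.cast_ne_zero.mpr hn
  have hI : Complex.I ≠ 0 := Complex.I_ne_zero
  push_cast
  field_simp
  ring_nf

lemma norm_cF'' (a b : ℝ) (n : ℤ) :
    ‖fourierCoeffOn Real.two_pi_pos (F'' a b) n‖ ≤ |a| + a^2 := by
  have hC : (0:ℝ) ≤ |a| + a^2 := by positivity
  rw [fourierCoeffOn_eq_integral]
  rw [norm_smul, Real.norm_eq_abs]
  have habs : |1/(2*π - 0)| = 1/(2*π) := by
    rw [sub_zero, abs_of_pos (by positivity)]
  rw [habs]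
  have hb : ‖∫ x in (0:ℝ)..2*π, fourier (-n) (x : AddCircle (2*π - 0)) • F'' a b x‖
      ≤ (|a| + a^2) * |2*π - 0| := by
    apply intervalIntegral.norm_integral_le_of_norm_le_const
    intro x _
    rw [norm_smul]
    have h1 : ‖fourier (-n) (x : AddCircle (2*π - 0))‖ = 1 := by
      rw [fourier_apply, Circle.norm_coe]
    rw [h1, one_mul]
    exact normF'' a b x
  calc 1/(2*π) * ‖_‖ ≤ 1/(2*π) * ((|a| + a^2) * |2*π - 0|) := by
        have h0 : (0:ℝ) ≤ 1/(2*π) := by positivity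
        exact mul_le_mul_of_nonneg_left hb h0
    _ = |a| + a^2 := by
        rw [sub_zero, abs_of_pos (show (0:ℝ) < 2*π by positivity)]
        field_simp

lemma norm_cF_le (a b : ℝ) {n : ℤ} (hn : n ≠ 0) :
    ‖cF a b n‖ ≤ (|a| + a^2) * (1/(n:ℝ)^2) := by
  have e1 : cF a b n = 1/(Complex.I * n) *
      (1/(Complex.I * n) * fourierCoeffOn Real.two_pi_pos (F'' a b) n) := by
    rw [cF, ibp (F a b) (F' a b) (F_boundary a b) (hasDerivF a b) (contF' a b) hn,
      ibp (F' a b) (F'' a b) (F'_boundary a b) (hasDerivF' a b) (contF'' a b) hn]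
  have hnorm : ‖(1/(Complex.I * (n:ℂ)) : ℂ)‖ = 1/|(n:ℝ)| := by
    rw [norm_div, norm_one, norm_mul, Complex.norm_I, one_mul, Complex.norm_intCast]
  rw [e1, norm_mul, norm_mul, hnorm]
  have h2 := norm_cF'' a b n
  have hn0 : (0:ℝ) < |(n:ℝ)| := by
    simp only [abs_pos]
    exact_mod_cast hn
  calc 1/|(n:ℝ)| * (1/|(n:ℝ)| * ‖fourierCoeffOn Real.two_pi_pos (F'' a b) n‖)
      ≤ 1/|(n:ℝ)| * (1/|(n:ℝ)| * (|a| + a^2)) := by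
        gcongr
    _ = (|a| + a^2) * (1/(n:ℝ)^2) := by
        have h : |(n:ℝ)| * |(n:ℝ)| = (n:ℝ)^2 := by rw [← sq, sq_abs]
        rw [← h]
        ring

lemma summable_cF (a b : ℝ) : Summable (fun n : ℤ => cF a b n) := by
  apply Summable.of_norm_bounded_eventually (g := fun n : ℤ => (|a| + a^2) * (1/(n:ℝ)^2))
  · exact (summable_one_div_int_pow.mpr one_lt_two).mul_left _
  · rw [Filter.eventually_cofinite]
    apply Set.Finite.subset (Set.finite_singleton (0:ℤ))
    intro n hn
    simp only [Set.mem_setOf_eq] at hn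
    simp only [Set.mem_singleton_iff]
    by_contra h0
    exact hn (norm_cF_le a b h0)

lemma fact2pi : Fact ((0:ℝ) < 2*π) := ⟨Real.two_pi_pos⟩

noncomputable def fC (a b : ℝ) : C(AddCircle (2*π), ℂ) :=
  ⟨(periodicF a b).lift, continuous_coinduced_dom.mpr (contF a b)⟩

lemma fC_coe (a b : ℝ) (x : ℝ) : fC a b (x : AddCircle (2*π)) = F a b x :=
  (periodicF a b).lift_coe x

lemma fourierCoeff_fC (a b : ℝ) (n : ℤ) :
    @fourierCoeff (2*π) fact2pi ℂ _ _ (⇑(fC a b)) n = cF a b n := by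
  haveI := fact2pi
  rw [fourierCoeff_eq_intervalIntegral _ n 0, cF, fourierCoeffOn_eq_integral, zero_add]
  congr 1
  · norm_num
  · apply intervalIntegral.integral_congr
    intro x _
    simp only [smul_eq_mul, fourier_coe_apply, fC_coe]
    norm_num

end SinExp

theorem sin_expansion (a b y : ℝ) :
    Summable (fun k : ℤ => besselJ k a * Real.sin (k * y + b)) ∧
    Real.sin (a * Real.sin y + b) = ∑' k : ℤ, besselJ k a * Real.sin (k * y + b) := by
  haveI := SinExp.fact2pi
  have hcoeff : fourierCoeff (⇑(SinExp.fC a b)) = SinExp.cF a b :=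
    funext (SinExp.fourierCoeff_fC a b)
  have hsummable : Summable (fourierCoeff (⇑(SinExp.fC a b))) := by
    rw [hcoeff]; exact SinExp.summable_cF a b
  have hsum := has_pointwise_sum_fourier_series_of_summable hsummable (y : AddCircle (2*π))
  have him := Complex.imCLM.hasSum hsum
  have hπ : (π:ℂ) ≠ 0 := Complex.ofReal_ne_zero.mpr Real.pi_ne_zero
  have key : (fun i : ℤ => Complex.imCLM
        (fourierCoeff (⇑(SinExp.fC a b)) i • fourier i (y : AddCircle (2*π))))
      = fun k : ℤ => besselJ k a * Real.sin (k * y + b) := by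
    funext i
    rw [SinExp.fourierCoeff_fC, SinExp.cF_eq_bessel, smul_eq_mul, fourier_coe_apply]
    have e : Complex.exp ((b:ℝ) * Complex.I) * ((besselJ i a : ℝ):ℂ) *
          Complex.exp (2 * (π:ℂ) * Complex.I * (i:ℂ) * (y:ℂ) / ((2*π : ℝ):ℂ))
        = ((besselJ i a : ℝ):ℂ) * Complex.exp (((i * y + b : ℝ):ℂ) * Complex.I) := by
      rw [mul_comm (Complex.exp _) (((besselJ i a : ℝ)):ℂ), mul_assoc, ← Complex.exp_add]
      congr 2
      push_cast
      field_simp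
      ring
    rw [e]
    simp only [Complex.imCLM_apply, Complex.mul_im, Complex.ofReal_re, Complex.ofReal_im,
      Complex.exp_ofReal_mul_I_im, zero_mul, add_zero]
  have hval : Complex.imCLM (SinExp.fC a b (y : AddCircle (2*π)))
      = Real.sin (a * Real.sin y + b) := by
    rw [SinExp.fC_coe, SinExp.F]
    simp only [Complex.imCLM_apply, Complex.exp_ofReal_mul_I_im]
  rw [key, hval] at him
  exact ⟨him.summable, him.tsum_eq.symm⟩

-- #print axioms check
end

section
/- For all real numbers a, b, y, the family k ↦ J_k(a)·cos(k·y + b), indexed by k ∈ ℤ, is summable, and its sum equals cos(a·sin(y) + b); that is, cos(a·sin(y) + b) = ∑_{k∈ℤ} J_k(a)·cos(k·y + b). -/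
open Real

open Complex intervalIntegral MeasureTheory


noncomputable def gfun (a b t : ℝ) : ℂ := Complex.exp ((a * Real.sin t + b : ℝ) * Complex.I)
noncomputable def gfun' (a b t : ℝ) : ℂ := ((a * Real.cos t : ℝ) : ℂ) * Complex.I * gfun a b t
noncomputable def gfun'' (a b t : ℝ) : ℂ :=
  ((-(a * Real.sin t) : ℝ) : ℂ) * Complex.I * gfun a b t
    + ((a * Real.cos t : ℝ) : ℂ) * Complex.I * gfun' a b t

lemma hasDerivAt_gfun (a b t : ℝ) : HasDerivAt (gfun a b) (gfun' a b t) t := by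
  have h1 : HasDerivAt (fun t : ℝ => a * Real.sin t + b) (a * Real.cos t) t :=
    ((Real.hasDerivAt_sin t).const_mul a).add_const b
  have h2 := ((h1.ofReal_comp).mul_const Complex.I).cexp
  rw [mul_comm] at h2
  exact h2

lemma hasDerivAt_gfun' (a b t : ℝ) : HasDerivAt (gfun' a b) (gfun'' a b t) t := by
  have h1 : HasDerivAt (fun t : ℝ => a * Real.cos t) (-(a * Real.sin t)) t := by
    simpa [mul_comm, mul_assoc] using (Real.hasDerivAt_cos t).const_mul a
  have h2 := (h1.ofReal_comp).mul_const Complex.I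
  exact h2.mul (hasDerivAt_gfun a b t)

lemma continuous_gfun (a b : ℝ) : Continuous (gfun a b) := by unfold gfun; fun_prop
lemma continuous_gfun' (a b : ℝ) : Continuous (gfun' a b) := by unfold gfun' gfun; fun_prop
lemma continuous_gfun'' (a b : ℝ) : Continuous (gfun'' a b) := by
  unfold gfun'' gfun' gfun; fun_prop

lemma norm_gfun (a b t : ℝ) : ‖gfun a b t‖ = 1 := Complex.norm_exp_ofReal_mul_I _

lemma norm_gfun' (a b t : ℝ) : ‖gfun' a b t‖ ≤ |a| := by
  rw [gfun', norm_mul, norm_mul, norm_gfun, Complex.norm_I, Complex.norm_real,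
    Real.norm_eq_abs, mul_one, mul_one, abs_mul]
  exact (mul_le_mul_of_nonneg_left (Real.abs_cos_le_one t) (abs_nonneg a)).trans_eq (mul_one _)

lemma norm_gfun'' (a b t : ℝ) : ‖gfun'' a b t‖ ≤ |a| + a ^ 2 := by
  have h1 : ‖((-(a * Real.sin t) : ℝ) : ℂ) * Complex.I * gfun a b t‖ ≤ |a| := by
    rw [norm_mul, norm_mul, norm_gfun, Complex.norm_I, Complex.norm_real,
      Real.norm_eq_abs, mul_one, mul_one, abs_neg, abs_mul]
    exact (mul_le_mul_of_nonneg_left (Real.abs_sin_le_one t) (abs_nonneg a)).trans_eq (mul_one _)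
  have h2 : ‖((a * Real.cos t : ℝ) : ℂ) * Complex.I * gfun' a b t‖ ≤ a ^ 2 := by
    rw [norm_mul, norm_mul, Complex.norm_I, Complex.norm_real, Real.norm_eq_abs, mul_one, abs_mul]
    calc |a| * |Real.cos t| * ‖gfun' a b t‖ ≤ |a| * 1 * |a| := by
          gcongr
          · exact Real.abs_cos_le_one t
          · exact norm_gfun' a b t
      _ = a ^ 2 := by rw [mul_one, ← abs_mul, ← sq, abs_sq]
  exact (norm_add_le _ _).trans (add_le_add h1 h2)

lemma periodic_gfun (a b : ℝ) : Function.Periodic (gfun a b) (2 * π) := by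
  intro t; simp [gfun, Real.sin_add_two_pi]

open Complex intervalIntegral MeasureTheory

lemma neg_pi_lt' : -π < -π + 2 * π := by have := Real.pi_pos; linarith

lemma norm_fourier_apply {T : ℝ} (n : ℤ) (x : AddCircle T) : ‖fourier n x‖ = 1 := by
  rw [fourier_apply]
  exact Circle.norm_coe _

lemma norm_inv_coef (n : ℤ) :
    ‖(1 / (-2 * (π:ℂ) * Complex.I * (n:ℂ)) : ℂ)‖ = 1 / (2 * π * |(n:ℝ)|) := by
  rw [norm_div, norm_one]
  congr 1
  simp only [norm_mul, Complex.norm_I, Complex.norm_real, Real.norm_eq_abs,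
    Complex.norm_two, Complex.norm_intCast, norm_neg]
  rw [abs_of_pos Real.pi_pos]
  ring

open AddCircle in
lemma norm_coef_step {f f' : ℝ → ℂ} {n : ℤ} (hn : n ≠ 0)
    (hper : f (-π + 2 * π) = f (-π))
    (hf : ∀ x, HasDerivAt f (f' x) x) (hf' : Continuous f') :
    ‖fourierCoeffOn neg_pi_lt' f n‖ = ‖fourierCoeffOn neg_pi_lt' f' n‖ / |(n:ℝ)| := by
  have key := fourierCoeffOn_of_hasDerivAt neg_pi_lt' hn (fun x _ => hf x)
    (hf'.intervalIntegrable _ _)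
  rw [hper, sub_self, mul_zero, zero_sub] at key
  rw [key]
  have hc : ((-π + 2 * π : ℝ) : ℂ) - ((-π : ℝ) : ℂ) = ((2 * π : ℝ) : ℂ) := by push_cast; ring
  rw [norm_mul, norm_neg, norm_mul, hc, norm_inv_coef, Complex.norm_real, Real.norm_eq_abs,
    abs_of_pos (by positivity : (0:ℝ) < 2 * π)]
  have hπ : (2 * π) ≠ 0 := by positivity
  have hn' : |(n:ℝ)| ≠ 0 := by
    simp only [ne_eq, abs_eq_zero, Int.cast_eq_zero]; exact hn
  field_simp

lemma norm_coef''_le (a b : ℝ) (n : ℤ) :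
    ‖fourierCoeffOn neg_pi_lt' (gfun'' a b) n‖ ≤ |a| + a ^ 2 := by
  rw [fourierCoeffOn_eq_integral]
  have hM : (0:ℝ) ≤ |a| + a ^ 2 := by positivity
  have h1 : ‖∫ x in (-π)..(-π + 2*π), fourier (-n) (x : AddCircle (-π + 2*π - -π)) • gfun'' a b x‖
      ≤ (|a| + a ^ 2) * |(-π + 2*π) - (-π)| := by
    apply intervalIntegral.norm_integral_le_of_norm_le_const
    intro x _
    rw [norm_smul, norm_fourier_apply, one_mul]
    exact norm_gfun'' a b x
  calc ‖(1 / (-π + 2*π - -π)) • ∫ x in (-π)..(-π + 2*π),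
        fourier (-n) (x : AddCircle (-π + 2*π - -π)) • gfun'' a b x‖
      = ‖(1 / (-π + 2*π - -π) : ℝ)‖ * ‖∫ x in (-π)..(-π + 2*π),
        fourier (-n) (x : AddCircle (-π + 2*π - -π)) • gfun'' a b x‖ := norm_smul _ _
    _ ≤ ‖(1 / (-π + 2*π - -π) : ℝ)‖ * ((|a| + a ^ 2) * |(-π + 2*π) - (-π)|) :=
        mul_le_mul_of_nonneg_left h1 (norm_nonneg _)
    _ = |a| + a ^ 2 := by
        rw [Real.norm_eq_abs]
        have h2 : (-π + 2*π) - (-π) = 2 * π := by ring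
        rw [h2, abs_of_pos (by positivity : (0:ℝ) < 1/(2*π))]
        field_simp
        rw [abs_of_pos (by positivity : (0:ℝ) < 2 * π)]; ring

lemma norm_coef_le (a b : ℝ) {n : ℤ} (hn : n ≠ 0) :
    ‖fourierCoeffOn neg_pi_lt' (gfun a b) n‖ ≤ (|a| + a ^ 2) / (n:ℝ) ^ 2 := by
  have hper1 : gfun a b (-π + 2 * π) = gfun a b (-π) := periodic_gfun a b (-π)
  have hper2 : gfun' a b (-π + 2 * π) = gfun' a b (-π) := by
    simp [gfun', hper1, Real.cos_add_two_pi]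
  have e1 := norm_coef_step hn hper1 (hasDerivAt_gfun a b) (continuous_gfun' a b)
  have e2 := norm_coef_step hn hper2 (hasDerivAt_gfun' a b) (continuous_gfun'' a b)
  rw [e1, e2]
  have h3 := norm_coef''_le a b n
  have hn' : (0:ℝ) < |(n:ℝ)| := by
    simp only [abs_pos, ne_eq, Int.cast_eq_zero]; exact hn
  have hn2 : (0:ℝ) < (n:ℝ) ^ 2 := by
    have : ((n:ℝ)) ≠ 0 := by simpa using hn
    positivity
  rw [div_div, ← abs_mul, ← sq, _root_.abs_of_nonneg (sq_nonneg ((n:ℝ)))]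
  gcongr

lemma integral_symm (f : ℝ → ℝ) (hf : Continuous f) :
    ∫ x in (-π)..π, f x = ∫ x in (0:ℝ)..π, (f (-x) + f x) := by
  have h1 : ∫ x in (0:ℝ)..π, f (-x) = ∫ x in (-π)..(0:ℝ), f x := by
    simpa using intervalIntegral.integral_comp_neg (a := (0:ℝ)) (b := π) f
  have hA : IntervalIntegrable (fun x : ℝ => f (-x)) MeasureTheory.volume 0 π :=
    Continuous.intervalIntegrable (by fun_prop) _ _
  calc ∫ x in (-π)..π, f x
      = (∫ x in (-π)..(0:ℝ), f x) + ∫ x in (0:ℝ)..π, f x :=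
        (intervalIntegral.integral_add_adjacent_intervals (hf.intervalIntegrable _ _)
          (hf.intervalIntegrable _ _)).symm
    _ = (∫ x in (0:ℝ)..π, f (-x)) + ∫ x in (0:ℝ)..π, f x := by rw [h1]
    _ = ∫ x in (0:ℝ)..π, (f (-x) + f x) :=
        (intervalIntegral.integral_add hA (hf.intervalIntegrable _ _)).symm

lemma coef_eq (a b : ℝ) (n : ℤ) :
    fourierCoeffOn neg_pi_lt' (gfun a b) n
      = ((besselJ n a : ℝ) : ℂ) * Complex.exp ((b:ℝ) * Complex.I) := by
  have hπ : (π:ℝ) ≠ 0 := Real.pi_ne_zero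
  have hπC : ((π:ℝ):ℂ) ≠ 0 := Complex.ofReal_ne_zero.mpr hπ
  rw [fourierCoeffOn_eq_integral]
  have hint : ∀ x : ℝ, (fourier (-n) (x : AddCircle (-π + 2*π - -π))) • gfun a b x
      = Complex.exp ((b:ℝ) * Complex.I) *
        ((Real.cos (a * Real.sin x - n * x) : ℝ) + (Real.sin (a * Real.sin x - n * x) : ℝ)
          * Complex.I) := by
    intro x
    rw [fourier_coe_apply, smul_eq_mul, gfun, ← Complex.exp_add]
    have hexp : 2 * (π:ℂ) * Complex.I * ((-n : ℤ):ℂ) * (x:ℂ) / ((-π + 2*π - -π : ℝ):ℂ)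
        + ((a * Real.sin x + b : ℝ):ℂ) * Complex.I
        = ((b:ℝ):ℂ) * Complex.I + ((a * Real.sin x - n * x : ℝ):ℂ) * Complex.I := by
      have hT : ((-π + 2*π - -π : ℝ) : ℂ) = 2 * (π:ℂ) := by push_cast; ring
      rw [hT]
      push_cast
      field_simp
      ring
    rw [hexp, Complex.exp_add]
    congr 1
    rw [Complex.exp_mul_I, Complex.ofReal_cos, Complex.ofReal_sin]
  have hb2 : ∫ x in (-π)..(-π + 2*π), (fourier (-n) (x : AddCircle (-π + 2*π - -π)))
      • gfun a b x = ∫ x in (-π)..π, (fourier (-n) (x : AddCircle (-π + 2*π - -π)))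
      • gfun a b x := by
    have hb : -π + 2*π = π := by ring
    rw [hb]
  rw [hb2]
  simp_rw [hint]
  rw [intervalIntegral.integral_const_mul]
  have hcos : Continuous fun x : ℝ => Real.cos (a * Real.sin x - n * x) := by fun_prop
  have hsin : Continuous fun x : ℝ => Real.sin (a * Real.sin x - n * x) := by fun_prop
  have hA : IntervalIntegrable (fun x : ℝ => ((Real.cos (a * Real.sin x - n * x) : ℝ) : ℂ))
      MeasureTheory.volume (-π) π := Continuous.intervalIntegrable (by fun_prop) _ _
  have hB : IntervalIntegrable
      (fun x : ℝ => ((Real.sin (a * Real.sin x - n * x) : ℝ) : ℂ) * Complex.I)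
      MeasureTheory.volume (-π) π := Continuous.intervalIntegrable (by fun_prop) _ _
  rw [intervalIntegral.integral_add hA hB,
    intervalIntegral.integral_mul_const, intervalIntegral.integral_ofReal,
    intervalIntegral.integral_ofReal]
  have hcos2 : (∫ x in (-π)..π, Real.cos (a * Real.sin x - n * x))
      = 2 * ∫ t in (0:ℝ)..π, Real.cos (n * t - a * Real.sin t) := by
    rw [integral_symm _ hcos, ← intervalIntegral.integral_const_mul]
    apply intervalIntegral.integral_congr
    intro x _
    dsimp only
    have h1 : a * Real.sin (-x) - ↑n * (-x) = -(a * Real.sin x - n * x) := by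
      rw [Real.sin_neg]; ring
    have h2 : (n:ℝ) * x - a * Real.sin x = -(a * Real.sin x - n * x) := by ring
    rw [h1, h2, Real.cos_neg]
    ring
  have hsin2 : (∫ x in (-π)..π, Real.sin (a * Real.sin x - n * x)) = 0 := by
    rw [integral_symm _ hsin]
    have : ∀ x ∈ Set.uIcc (0:ℝ) π, Real.sin (a * Real.sin (-x) - ↑n * (-x))
        + Real.sin (a * Real.sin x - ↑n * x) = 0 := by
      intro x _
      have h1 : a * Real.sin (-x) - ↑n * (-x) = -(a * Real.sin x - n * x) := by
        rw [Real.sin_neg]; ring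
      rw [h1, Real.sin_neg]; ring
    rw [intervalIntegral.integral_congr this]
    simp
  rw [hcos2, hsin2, besselJ]
  have hs : (1 / (-π + 2*π - -π) : ℝ) = 1 / (2*π) := by ring_nf
  rw [hs, Complex.real_smul]
  push_cast
  field_simp
  ring

theorem cos_expansion (a b y : ℝ) :
    Summable (fun k : ℤ => besselJ k a * Real.cos (k * y + b)) ∧
    Real.cos (a * Real.sin y + b) = ∑' k : ℤ, besselJ k a * Real.cos (k * y + b) := by
  haveI hfact : Fact ((0:ℝ) < 2 * π) := ⟨by positivity⟩
  have h2π : (0:ℝ) < 2 * π := by positivity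
  have hπC : ((π:ℝ):ℂ) ≠ 0 := Complex.ofReal_ne_zero.mpr Real.pi_ne_zero
  have hend : gfun a b (-π) = gfun a b (-π + 2*π) := (periodic_gfun a b (-π)).symm
  set F : C(AddCircle (2*π), ℂ) :=
    ⟨AddCircle.liftIco (2*π) (-π) (gfun a b),
      AddCircle.liftIco_continuous hend (continuous_gfun a b).continuousOn⟩ with hF
  have hcoeff : ∀ n : ℤ, fourierCoeff (⇑F) n = fourierCoeffOn neg_pi_lt' (gfun a b) n :=
    fun n => fourierCoeff_liftIco_eq (gfun a b) n
  have hsummable : Summable (fourierCoeff (⇑F)) := by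
    apply Summable.of_norm_bounded_eventually (g := fun n : ℤ => (|a| + a^2) / (n:ℝ)^2)
    · have h := (summable_one_div_int_pow.mpr one_lt_two).mul_left (|a| + a^2)
      simpa [mul_one_div, div_eq_mul_inv] using h
    · rw [Filter.eventually_cofinite]
      apply Set.Finite.subset (Set.finite_singleton (0:ℤ))
      intro n hn
      simp only [Set.mem_setOf_eq] at hn
      simp only [Set.mem_singleton_iff]
      by_contra h
      exact hn (by rw [hcoeff]; exact norm_coef_le a b h)
  have hsum := has_pointwise_sum_fourier_series_of_summable hsummable ((y : ℝ) : AddCircle (2*π))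
  have hFy : F ((y : ℝ) : AddCircle (2*π)) = gfun a b y := by
    set z := toIcoMod h2π (-π) y with hzdef
    have hzy : z = y - toIcoDiv h2π (-π) y • (2*π) := (self_sub_toIcoDiv_zsmul h2π (-π) y).symm
    have hmem : z ∈ Set.Ico (-π) (-π + 2*π) := toIcoMod_mem_Ico h2π (-π) y
    have hcoe : ((z : ℝ) : AddCircle (2*π)) = ((y : ℝ) : AddCircle (2*π)) := by
      rw [hzy]
      refine QuotientAddGroup.eq.mpr ?_
      have : -(y - toIcoDiv h2π (-π) y • (2*π)) + y = toIcoDiv h2π (-π) y • (2*π) := by abel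
      rw [this]
      exact AddSubgroup.zsmul_mem_zmultiples _ _
    have hFz : F ((z : ℝ) : AddCircle (2*π)) = gfun a b z := AddCircle.liftIco_coe_apply (f := gfun a b) hmem
    rw [← hcoe, hFz, hzy]
    exact (periodic_gfun a b).sub_zsmul_eq _
  have hre := hsum.mapL Complex.reCLM
  have hterm : ∀ n : ℤ,
      Complex.reCLM (fourierCoeff (⇑F) n • fourier n ((y : ℝ) : AddCircle (2*π)))
        = besselJ n a * Real.cos (n * y + b) := by
    intro n
    rw [hcoeff, coef_eq, smul_eq_mul, fourier_coe_apply]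
    have hcomb : ((besselJ n a : ℝ):ℂ) * Complex.exp ((b:ℝ) * Complex.I)
        * Complex.exp (2 * (π:ℂ) * Complex.I * (n:ℂ) * (y:ℂ) / ((2*π : ℝ):ℂ))
        = ((besselJ n a : ℝ):ℂ) * Complex.exp (((n * y + b : ℝ):ℂ) * Complex.I) := by
      rw [mul_assoc, ← Complex.exp_add]
      congr 2
      push_cast
      field_simp
      ring
    rw [hcomb]
    simp only [Complex.reCLM_apply, Complex.mul_re, Complex.ofReal_re, Complex.ofReal_im,
      Complex.exp_ofReal_mul_I_re, zero_mul, sub_zero]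
  have hval : Complex.reCLM (F ((y : ℝ) : AddCircle (2*π))) = Real.cos (a * Real.sin y + b) := by
    rw [hFy, gfun]
    simp only [Complex.reCLM_apply, Complex.exp_ofReal_mul_I_re]
  rw [funext hterm, hval] at hre
  exact ⟨hre.summable, hre.tsum_eq.symm⟩
end

section
/- (Expansion of a sinusoidal neuron, cosine form.) Let n ≥ 1 and let a, ω, φ ∈ ℝ^n and b, x ∈ ℝ. Then the family k ↦ α_k(a)·cos(∑_{i=1}^n k_i(ω_i x + φ_i) + b), indexed by k ∈ ℤ^n, is summable and cos(∑_{i=1}^n a_i·sin(ω_i x + φ_i) + b) = ∑_{k∈ℤ^n} α_k(a)·cos(∑_{i=1}^n k_i(ω_i x + φ_i) + b). -/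
open Real MeasureTheory Complex intervalIntegral

/-- Amplitude `α_k(a) = ∏_{i=1}^n J_{k_i}(a_i)`. -/
noncomputable def amp {n : ℕ} (a : Fin n → ℝ) (k : Fin n → ℤ) : ℝ :=
  ∏ i, besselJ (k i) (a i)

namespace JacobiAnger

local instance fact2pi : Fact ((0:ℝ) < 2 * π) := ⟨by positivity⟩
local instance fact2pi' : Fact ((0:ℝ) < 2 * π - 0) := ⟨by norm_num [Real.pi_pos]⟩

noncomputable def g (a : ℝ) : ℝ → ℂ := fun θ => Complex.exp (Complex.I * (a * Real.sin θ))

lemma g_cont (a : ℝ) : Continuous (g a) := by unfold g; fun_prop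

lemma g_per (a : ℝ) : Function.Periodic (g a) (2 * π) := fun θ => by
  simp [g, Real.sin_add_two_pi]

noncomputable def G (a : ℝ) : C(AddCircle (2 * π), ℂ) :=
  ⟨(g_per a).lift, continuous_coinduced_dom.mpr (g_cont a)⟩

lemma G_coe (a θ : ℝ) : G a (θ : AddCircle (2 * π)) = g a θ := (g_per a).lift_coe θ

noncomputable def g1 (a : ℝ) : ℝ → ℂ :=
  fun θ => g a θ * (Complex.I * (a * Real.cos θ))

noncomputable def g2 (a : ℝ) : ℝ → ℂ :=
  fun θ => g a θ * (Complex.I * (a * Real.cos θ)) ^ 2 + g a θ * (Complex.I * (a * (-Real.sin θ)))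

lemma g1_cont (a : ℝ) : Continuous (g1 a) := by unfold g1; exact (g_cont a).mul (by fun_prop)

lemma g2_cont (a : ℝ) : Continuous (g2 a) := by
  unfold g2
  exact (((g_cont a).mul (by fun_prop)).add ((g_cont a).mul (by fun_prop)))

lemma hasDerivAt_g (a θ : ℝ) : HasDerivAt (g a) (g1 a θ) θ := by
  have h1 : HasDerivAt (fun x : ℝ => ((Real.sin x : ℝ) : ℂ)) (Real.cos θ) θ :=
    (Real.hasDerivAt_sin θ).ofReal_comp
  have h2 := (h1.const_mul ((a : ℂ))).const_mul Complex.I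
  exact h2.cexp

lemma hasDerivAt_g1 (a θ : ℝ) : HasDerivAt (g1 a) (g2 a θ) θ := by
  have h1 : HasDerivAt (fun x : ℝ => ((Real.cos x : ℝ) : ℂ)) (-Real.sin θ) θ := by
    simpa using (Real.hasDerivAt_cos θ).ofReal_comp
  have h2 := (h1.const_mul ((a : ℂ))).const_mul Complex.I
  have := (hasDerivAt_g a θ).mul h2
  refine this.congr_deriv ?_
  unfold g2 g1
  push_cast
  ring

lemma coeff_step {f f' : ℝ → ℂ} (hd : ∀ θ : ℝ, HasDerivAt f (f' θ) θ)
    (hc : Continuous f') (hper : f (2 * π) = f 0) {n : ℤ} (hn : n ≠ 0) :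
    fourierCoeffOn (by positivity : (0:ℝ) < 2 * π) f n =
      (1 / (Complex.I * n)) * fourierCoeffOn (by positivity : (0:ℝ) < 2 * π) f' n := by
  rw [fourierCoeffOn_of_hasDerivAt (by positivity) hn (fun x _ => hd x)
    (hc.intervalIntegrable 0 (2 * π))]
  rw [hper, sub_self, mul_zero, zero_sub]
  have hπ : (π : ℂ) ≠ 0 := Complex.ofReal_ne_zero.mpr Real.pi_ne_zero
  have hn' : (n : ℂ) ≠ 0 := Int.cast_ne_zero.mpr hn
  have hI : Complex.I ≠ 0 := Complex.I_ne_zero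
  push_cast
  field_simp
  ring

lemma g_norm (a θ : ℝ) : ‖g a θ‖ = 1 := by
  rw [g, Complex.norm_exp]
  have : (Complex.I * (a * Real.sin θ)).re = 0 := by simp
  rw [this, Real.exp_zero]

lemma g2_norm_le (a θ : ℝ) : ‖g2 a θ‖ ≤ |a| ^ 2 + |a| := by
  unfold g2
  refine (norm_add_le _ _).trans ?_
  rw [norm_mul, norm_mul, g_norm, one_mul, one_mul, norm_pow, norm_mul, norm_mul, norm_mul,
    norm_mul]
  simp only [Complex.norm_I, Complex.norm_real, Real.norm_eq_abs, one_mul,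
    Complex.ofReal_neg, map_neg, abs_neg]
  rw [show ‖(-(Real.sin θ:ℂ))‖ = |Real.sin θ| by rw [norm_neg, Complex.norm_real, Real.norm_eq_abs]]
  have h1 : |Real.cos θ| ≤ 1 := Real.abs_cos_le_one θ
  have h2 : |Real.sin θ| ≤ 1 := Real.abs_sin_le_one θ
  have ha : (0:ℝ) ≤ |a| := abs_nonneg a
  have hc : (0:ℝ) ≤ |Real.cos θ| := abs_nonneg _
  have e1 : (|a| * |Real.cos θ|) ^ 2 ≤ |a| ^ 2 := by
    have := mul_le_of_le_one_right ha h1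
    exact pow_le_pow_left₀ (by positivity) this 2
  have e2 : |a| * |Real.sin θ| ≤ |a| := mul_le_of_le_one_right ha h2
  linarith

lemma norm_coeffOn_g2_le (a : ℝ) (n : ℤ) :
    ‖fourierCoeffOn (by positivity : (0:ℝ) < 2 * π) (g2 a) n‖ ≤ |a| ^ 2 + |a| := by
  rw [fourierCoeffOn_eq_integral]
  rw [norm_smul]
  have hb : ‖∫ x in (0:ℝ)..2*π, fourier (-n) (x : AddCircle (2*π - 0)) • g2 a x‖
      ≤ (|a| ^ 2 + |a|) * |2*π - 0| := by
    apply intervalIntegral.norm_integral_le_of_norm_le_const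
    intro x _
    rw [norm_smul]
    have h1 : ‖(fourier (-n) (x : AddCircle (2*π - 0)) : ℂ)‖ = 1 := by
      rw [fourier_apply]
      exact Circle.norm_coe _
    rw [h1, one_mul]
    exact g2_norm_le a x
  calc ‖(1 / (2*π - 0) : ℝ)‖ * ‖∫ x in (0:ℝ)..2*π, fourier (-n) (x : AddCircle (2*π - 0)) • g2 a x‖
      ≤ ‖(1 / (2*π - 0) : ℝ)‖ * ((|a| ^ 2 + |a|) * |2*π - 0|) := by
        exact mul_le_mul_of_nonneg_left hb (norm_nonneg _)
    _ = |a| ^ 2 + |a| := by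
        rw [Real.norm_eq_abs]
        rw [abs_of_pos (by norm_num [Real.pi_pos] : (0:ℝ) < 1/(2*π - 0)),
          abs_of_pos (by norm_num [Real.pi_pos] : (0:ℝ) < 2*π - 0)]
        field_simp

lemma fourierCoeff_G_eq_On (a : ℝ) (n : ℤ) :
    fourierCoeff (⇑(G a)) n = fourierCoeffOn (by positivity : (0:ℝ) < 2 * π) (g a) n := by
  rw [fourierCoeff_eq_intervalIntegral _ n 0, fourierCoeffOn_eq_integral, zero_add]
  rw [show (2 * π - 0 : ℝ) = 2 * π by ring]
  congr 1
  all_goals exact intervalIntegral.integral_congr fun y _ => by rw [G_coe]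

lemma fourierCoeff_G (a : ℝ) (n : ℤ) : fourierCoeff (⇑(G a)) n = (besselJ n a : ℂ) := by
  rw [fourierCoeff_eq_intervalIntegral _ n 0, zero_add]
  have key : ∀ x : ℝ, (fourier (-n) (x : AddCircle (2*π)) : ℂ) • G a x
      = Complex.exp (Complex.I * (a * Real.sin x - n * x)) := by
    intro x
    rw [smul_eq_mul, fourier_coe_apply, G_coe, g, ← Complex.exp_add]
    congr 1
    have hπ : (π:ℂ) ≠ 0 := Complex.ofReal_ne_zero.mpr Real.pi_ne_zero
    push_cast
    field_simp
    ring
  simp_rw [key]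
  have hcont : ∀ c d : ℝ, IntervalIntegrable
      (fun x : ℝ => Complex.exp (Complex.I * (a * Real.sin x - n * x))) volume c d := by
    intro c d
    exact (Continuous.intervalIntegrable (by fun_prop) c d)
  rw [← intervalIntegral.integral_add_adjacent_intervals (b := π) (hcont 0 π) (hcont π (2*π))]
  have hsub := intervalIntegral.integral_comp_sub_left
    (a := 0) (b := π) (fun x : ℝ => Complex.exp (Complex.I * (a * Real.sin x - n * x))) (2*π)
  rw [show 2*π - π = π by ring, show 2*π - 0 = 2*π by ring] at hsub
  rw [← hsub, ← intervalIntegral.integral_add (hcont 0 π)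
    ((Continuous.intervalIntegrable (by fun_prop) 0 π))]
  have key2 : ∀ x : ℝ, Complex.exp (Complex.I * (a * Real.sin x - n * x))
      + Complex.exp (Complex.I * ((a:ℂ) * ((Real.sin (2*π - x) : ℝ) : ℂ) - (n:ℂ) * (((2*π - x : ℝ)) : ℂ)))
      = ((2 * Real.cos (n * x - a * Real.sin x) : ℝ) : ℂ) := by
    intro x
    have hs : Real.sin (2*π - x) = - Real.sin x := by
      rw [Real.sin_sub]; simp [Real.sin_two_pi, Real.cos_two_pi]
    rw [hs]
    rw [show Complex.I * ((a:ℂ) * ((- Real.sin x : ℝ) : ℂ) - (n:ℂ) * (((2*π - x : ℝ)) : ℂ))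
        = -(((a * Real.sin x - n * x : ℝ)) : ℂ) * Complex.I + ((-n : ℤ) : ℂ) * (2 * π * Complex.I) by
      push_cast; ring]
    rw [show Complex.I * ((a:ℂ) * Real.sin x - n * x)
        = (((a * Real.sin x - n * x : ℝ)) : ℂ) * Complex.I by push_cast; ring]
    rw [Complex.exp_add, Complex.exp_int_mul_two_pi_mul_I, mul_one, ← Complex.ofReal_neg,
      Complex.exp_mul_I, Complex.exp_mul_I, ← Complex.ofReal_cos, ← Complex.ofReal_sin,
      ← Complex.ofReal_cos, ← Complex.ofReal_sin, Real.cos_neg, Real.sin_neg,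
      show (n:ℝ) * x - a * Real.sin x = -(a * Real.sin x - (n:ℝ) * x) by ring, Real.cos_neg]
    push_cast
    ring
  simp_rw [key2]
  rw [intervalIntegral.integral_ofReal]
  have : (∫ x in (0:ℝ)..π, 2 * Real.cos (n * x - a * Real.sin x))
      = 2 * ∫ x in (0:ℝ)..π, Real.cos (n * x - a * Real.sin x) := by
    simpa using intervalIntegral.integral_const_mul (2:ℝ) (fun x => Real.cos (n * x - a * Real.sin x))
  rw [this, besselJ, Complex.real_smul]
  have hπ : (π:ℂ) ≠ 0 := Complex.ofReal_ne_zero.mpr Real.pi_ne_zero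
  push_cast
  field_simp



lemma summable_fourierCoeff_G (a : ℝ) : Summable (fun n : ℤ => fourierCoeff (⇑(G a)) n) := by
  have hper1 : g a (2 * π) = g a 0 := by simp [g, Real.sin_two_pi]
  have hper2 : g1 a (2 * π) = g1 a 0 := by
    simp [g1, hper1, Real.cos_two_pi]
  apply Summable.of_norm_bounded_eventually (g := fun n : ℤ => (|a|^2 + |a|) * (1 / (n:ℝ)^2))
  · exact ((Real.summable_one_div_int_pow.mpr one_lt_two).mul_left _)
  · filter_upwards [Filter.eventually_cofinite_ne 0] with n hn
    rw [fourierCoeff_G_eq_On,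
      coeff_step (hasDerivAt_g a) (g1_cont a) hper1 hn,
      coeff_step (hasDerivAt_g1 a) (g2_cont a) hper2 hn]
    rw [norm_mul, norm_mul]
    have hnn : ‖(1 / (Complex.I * n) : ℂ)‖ = 1 / |(n:ℝ)| := by
      rw [norm_div, norm_one, norm_mul, Complex.norm_I, one_mul]
      simp [Complex.norm_intCast]
    rw [hnn]
    have h2 := norm_coeffOn_g2_le a n
    have hpos : (0:ℝ) < |(n:ℝ)| := by
      simp only [abs_pos]
      exact_mod_cast hn
    calc 1 / |(n:ℝ)| * (1 / |(n:ℝ)| * ‖fourierCoeffOn (by positivity) (g2 a) n‖)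
        ≤ 1 / |(n:ℝ)| * (1 / |(n:ℝ)| * (|a|^2 + |a|)) := by
          apply mul_le_mul_of_nonneg_left _ (by positivity)
          exact mul_le_mul_of_nonneg_left h2 (by positivity)
      _ = (|a|^2 + |a|) * (1 / (n:ℝ)^2) := by
          rw [show ((n:ℝ))^2 = |(n:ℝ)|^2 from (_root_.sq_abs _).symm]
          ring

lemma summable_besselJ (a : ℝ) : Summable (fun n : ℤ => besselJ n a) := by
  have h := summable_fourierCoeff_G a
  simp_rw [fourierCoeff_G] at h
  exact (RCLike.summable_ofReal ℂ).mp h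



lemma exp_I_real_norm (r : ℝ) : ‖Complex.exp (Complex.I * r)‖ = 1 := by
  rw [Complex.norm_exp]
  simp

lemma besselJ_hasSum (a θ : ℝ) :
    HasSum (fun k : ℤ => (besselJ k a : ℂ) * Complex.exp (Complex.I * ((k : ℂ) * (θ : ℂ))))
      (Complex.exp (Complex.I * (a * Real.sin θ))) := by
  have hsum : Summable (fourierCoeff (⇑(G a))) := summable_fourierCoeff_G a
  have h := has_pointwise_sum_fourier_series_of_summable hsum (θ : AddCircle (2 * π))
  rw [G_coe] at h
  have heq : (fun i : ℤ => fourierCoeff (⇑(G a)) i • fourier i ((θ : ℝ) : AddCircle (2 * π)))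
      = fun k : ℤ => (besselJ k a : ℂ) * Complex.exp (Complex.I * ((k : ℂ) * (θ : ℂ))) := by
    funext k
    rw [fourierCoeff_G, smul_eq_mul, fourier_coe_apply]
    congr 1
    congr 1
    rw [div_eq_iff (by norm_num [Real.pi_ne_zero] : ((2 * π : ℝ) : ℂ) ≠ 0)]
    push_cast
    ring
  rw [heq] at h
  exact h

lemma term_norm (a θ : ℝ) (k : ℤ) :
    ‖(besselJ k a : ℂ) * Complex.exp (Complex.I * ((k : ℂ) * (θ : ℂ)))‖ = |besselJ k a| := by
  rw [norm_mul, show ((k : ℂ) * (θ : ℂ)) = (((k * θ : ℝ)) : ℂ) by push_cast; ring,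
    exp_I_real_norm, mul_one, Complex.norm_real, Real.norm_eq_abs]

def consEquivZ (n : ℕ) : (ℤ × (Fin n → ℤ)) ≃ (Fin (n + 1) → ℤ) where
  toFun p := Fin.cons p.1 p.2
  invFun k := (k 0, fun i => k i.succ)
  left_inv p := by
    ext i
    · simp
    · simp
  right_inv k := by
    funext i
    refine Fin.cases ?_ ?_ i
    · simp
    · intro j; simp

set_option maxHeartbeats 1000000 in
lemma multi (n : ℕ) (a θ : Fin n → ℝ) :
    Summable (fun k : Fin n → ℤ => ∏ i, |besselJ (k i) (a i)|) ∧
    HasSum (fun k : Fin n → ℤ => (∏ i, (besselJ (k i) (a i) : ℂ)) *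
        Complex.exp (Complex.I * ∑ i, (k i : ℂ) * (θ i : ℂ)))
      (Complex.exp (Complex.I * ∑ i, (a i : ℂ) * (Real.sin (θ i) : ℂ))) := by
  induction n with
  | zero =>
    haveI : Subsingleton (Fin 0 → ℤ) := ⟨fun f g => funext fun i => i.elim0⟩
    constructor
    · have := hasSum_single (f := fun k : Fin 0 → ℤ => ∏ i, |besselJ (k i) (a i)|)
        (fun _ => (0:ℤ)) (fun b hb => absurd (Subsingleton.elim b _) hb)
      exact this.summable
    · have := hasSum_single (f := fun k : Fin 0 → ℤ => (∏ i, (besselJ (k i) (a i) : ℂ)) *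
          Complex.exp (Complex.I * ∑ i, (k i : ℂ) * (θ i : ℂ)))
        (fun _ => (0:ℤ)) (fun b hb => absurd (Subsingleton.elim b _) hb)
      simpa using this
  | succ n ih =>
    obtain ⟨ihS, ihH⟩ := ih (fun i => a i.succ) (fun i => θ i.succ)
    beta_reduce at ihS ihH
    have h1 := besselJ_hasSum (a 0) (θ 0)
    have h1n : Summable (fun k : ℤ =>
        ‖(besselJ k (a 0) : ℂ) * Complex.exp (Complex.I * ((k : ℂ) * ((θ 0 : ℝ) : ℂ)))‖) := by
      simp_rw [term_norm]
      exact (summable_besselJ (a 0)).abs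
    have ihSnorm : Summable (fun k : Fin n → ℤ => ‖(∏ i, (besselJ (k i) (a (Fin.succ i)) : ℂ)) *
        Complex.exp (Complex.I * ∑ i, (k i : ℂ) * ((θ (Fin.succ i) : ℝ) : ℂ))‖) := by
      have hnorm : ∀ k : Fin n → ℤ, ‖(∏ i, (besselJ (k i) (a (Fin.succ i)) : ℂ)) *
          Complex.exp (Complex.I * ∑ i, (k i : ℂ) * ((θ (Fin.succ i) : ℝ) : ℂ))‖
          = ∏ i, |besselJ (k i) (a (Fin.succ i))| := by
        intro k
        rw [norm_mul, show (∑ i, (k i : ℂ) * ((θ (Fin.succ i) : ℝ) : ℂ))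
            = (((∑ i, (k i : ℝ) * θ (Fin.succ i) : ℝ)) : ℂ) by push_cast; ring,
          exp_I_real_norm, mul_one, norm_prod]
        congr 1
        funext i
        rw [Complex.norm_real, Real.norm_eq_abs]
      simpa only [hnorm] using ihS
    have hs := summable_mul_of_summable_norm h1n ihSnorm
    have H := h1.mul ihH hs
    constructor
    · rw [← (consEquivZ n).summable_iff]
      have hcomp : ((fun k : Fin (n+1) → ℤ => ∏ i, |besselJ (k i) (a i)|) ∘
            (consEquivZ n))
          = fun p : ℤ × (Fin n → ℤ) =>
            |besselJ p.1 (a 0)| * ∏ i, |besselJ (p.2 i) (a i.succ)| := by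
        funext p
        simp [consEquivZ, Fin.prod_univ_succ]
      rw [hcomp]
      have hOK := (summable_besselJ (a 0)).abs.mul_of_nonneg ihS (fun _ => abs_nonneg _)
        (fun _ => Finset.prod_nonneg fun _ _ => abs_nonneg _)
      exact hOK
    · rw [← (consEquivZ n).hasSum_iff]
      have hfun : ((fun k : Fin (n+1) → ℤ => (∏ i, (besselJ (k i) (a i) : ℂ)) *
            Complex.exp (Complex.I * ∑ i, (k i : ℂ) * (θ i : ℂ))) ∘
            (consEquivZ n))
          = fun p : ℤ × (Fin n → ℤ) =>
            ((besselJ p.1 (a 0) : ℂ) * Complex.exp (Complex.I * ((p.1 : ℂ) * ((θ 0 : ℝ) : ℂ)))) *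
            ((∏ i, (besselJ (p.2 i) (a i.succ) : ℂ)) *
              Complex.exp (Complex.I * ∑ i, (p.2 i : ℂ) * ((θ i.succ : ℝ) : ℂ))) := by
        funext p
        simp only [consEquivZ, Equiv.coe_fn_mk, Function.comp_apply, Fin.prod_univ_succ,
          Fin.sum_univ_succ, Fin.cons_zero, Fin.cons_succ]
        rw [mul_add, Complex.exp_add]
        ring
      rw [hfun, show Complex.exp (Complex.I * ∑ i, (a i : ℂ) * (Real.sin (θ i) : ℂ))
          = Complex.exp (Complex.I * ((a 0 : ℂ) * (Real.sin (θ 0) : ℂ))) *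
            Complex.exp (Complex.I * ∑ i : Fin n, (a i.succ : ℂ) *
              (Real.sin (θ i.succ) : ℂ)) by
        rw [Fin.sum_univ_succ, mul_add, Complex.exp_add]]
      exact H

end JacobiAnger

theorem sinusoidal_neuron_expansion_cos (n : ℕ) (hn : 1 ≤ n)
    (a ω φ : Fin n → ℝ) (b x : ℝ) :
    Summable (fun k : Fin n → ℤ =>
      amp a k * Real.cos ((∑ i, (k i : ℝ) * (ω i * x + φ i)) + b)) ∧
    Real.cos ((∑ i, a i * Real.sin (ω i * x + φ i)) + b) =
      ∑' k : Fin n → ℤ,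
        amp a k * Real.cos ((∑ i, (k i : ℝ) * (ω i * x + φ i)) + b) := by
  obtain ⟨-, hH⟩ := JacobiAnger.multi n a (fun i => ω i * x + φ i)
  have H2 := hH.mul_left (Complex.exp (Complex.I * b))
  have heq : (fun k : Fin n → ℤ => Complex.exp (Complex.I * b) *
        ((∏ i, (besselJ (k i) (a i) : ℂ)) *
          Complex.exp (Complex.I * ∑ i, (k i : ℂ) * ((ω i * x + φ i : ℝ) : ℂ))))
      = fun k : Fin n → ℤ => ((amp a k : ℝ) : ℂ) *
          Complex.exp ((((∑ i, (k i : ℝ) * (ω i * x + φ i)) + b : ℝ) : ℂ) * Complex.I) := by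
    funext k
    rw [show Complex.exp (Complex.I * b) *
        ((∏ i, (besselJ (k i) (a i) : ℂ)) *
          Complex.exp (Complex.I * ∑ i, (k i : ℂ) * ((ω i * x + φ i : ℝ) : ℂ)))
        = (∏ i, (besselJ (k i) (a i) : ℂ)) *
          Complex.exp (Complex.I * b + Complex.I * ∑ i, (k i : ℂ) * ((ω i * x + φ i : ℝ) : ℂ))
        by rw [Complex.exp_add]; ring]
    congr 1
    · rw [amp]
      push_cast
      rfl
    · congr 1
      push_cast
      ring
  rw [heq] at H2
  have htar : Complex.exp (Complex.I * b) *
        Complex.exp (Complex.I * ∑ i, ((a i : ℝ) : ℂ) * ((Real.sin (ω i * x + φ i) : ℝ) : ℂ))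
      = Complex.exp ((((∑ i, a i * Real.sin (ω i * x + φ i)) + b : ℝ) : ℂ) * Complex.I) := by
    rw [← Complex.exp_add]
    congr 1
    push_cast
    ring
  rw [htar] at H2
  have HR := Complex.reCLM.hasSum H2
  simp only [Complex.reCLM_apply] at HR
  have hre : ∀ (r c : ℝ), (((r : ℂ)) * Complex.exp ((c : ℂ) * Complex.I)).re = r * Real.cos c := by
    intro r c
    rw [Complex.re_ofReal_mul, Complex.exp_ofReal_mul_I_re]
  simp only [hre, Complex.exp_ofReal_mul_I_re] at HR
  exact ⟨HR.summable, HR.tsum_eq.symm⟩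
end

section
/- Let n ≥ 1 and let a ∈ ℝ^n with 0 < |a_i| ≤ 1 for every i. Then for every k ∈ ℤ^n, |α_k(a)| < 1 / (|k_1|!·…·|k_n|!·2^{|k_1|+…+|k_n|}). -/
open Real

lemma cont_param (k : ℤ) (x : ℝ) :
    Continuous fun t : ℝ => Real.cos ((k : ℝ) * t - x * Real.sin t) := by fun_prop

lemma besselJ_hasDerivAt (k : ℤ) (a : ℝ) :
    HasDerivAt (besselJ k)
      ((1 / π) * ∫ t in (0:ℝ)..π, Real.sin t * Real.sin ((k : ℝ) * t - a * Real.sin t)) a := by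
  have key := intervalIntegral.hasDerivAt_integral_of_dominated_loc_of_deriv_le
      (μ := MeasureTheory.volume)
      (F := fun (x : ℝ) (t : ℝ) => Real.cos ((k : ℝ) * t - x * Real.sin t))
      (F' := fun (x : ℝ) (t : ℝ) => Real.sin t * Real.sin ((k : ℝ) * t - x * Real.sin t))
      (a := 0) (b := π) (x₀ := a) (s := Metric.ball a 1) (bound := fun _ => 1)
      (Metric.ball_mem_nhds a one_pos)
      (Filter.Eventually.of_forall fun x => (cont_param k x).aestronglyMeasurable)
      ((cont_param k a).intervalIntegrable _ _)
      (Continuous.aestronglyMeasurable (by fun_prop))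
      (Filter.Eventually.of_forall fun t _ x _ => by
        rw [Real.norm_eq_abs, abs_mul]
        calc |Real.sin t| * |Real.sin ((k : ℝ) * t - x * Real.sin t)|
            ≤ 1 * |Real.sin ((k : ℝ) * t - x * Real.sin t)| :=
              mul_le_mul_of_nonneg_right (Real.abs_sin_le_one t) (abs_nonneg _)
          _ ≤ 1 * 1 := by
              have := Real.abs_sin_le_one ((k : ℝ) * t - x * Real.sin t)
              linarith
          _ = 1 := by ring)
      intervalIntegrable_const
      (Filter.Eventually.of_forall fun t _ x _ => by
        have h1 : HasDerivAt (fun x : ℝ => (k : ℝ) * t - x * Real.sin t) (-Real.sin t) x := by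
          simpa using ((hasDerivAt_id x).mul_const (Real.sin t)).const_sub ((k : ℝ) * t)
        have h2 := h1.cos
        exact h2.congr_deriv (by ring))
  exact key.2.const_mul (1 / π)

lemma besselJ_continuous (k : ℤ) : Continuous (besselJ k) :=
  continuous_iff_continuousAt.2 fun x => (besselJ_hasDerivAt k x).continuousAt

lemma key_integral (k : ℤ) (a : ℝ) :
    (∫ t in (0:ℝ)..π, ((k : ℝ) - a * Real.cos t) * Real.cos ((k : ℝ) * t - a * Real.sin t)) = 0 := by
  have hd : ∀ t ∈ Set.uIcc (0:ℝ) π,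
      HasDerivAt (fun t : ℝ => Real.sin ((k : ℝ) * t - a * Real.sin t))
        (((k : ℝ) - a * Real.cos t) * Real.cos ((k : ℝ) * t - a * Real.sin t)) t := by
    intro t _
    have h1 : HasDerivAt (fun t : ℝ => (k : ℝ) * t - a * Real.sin t)
        ((k : ℝ) - a * Real.cos t) t := by
      exact (((hasDerivAt_id t).const_mul (k : ℝ)).sub ((Real.hasDerivAt_sin t).const_mul a)).congr_deriv (by simp)
    have h2 := h1.sin
    convert h2 using 1
    ring
  rw [intervalIntegral.integral_eq_sub_of_hasDerivAt hd
    (Continuous.intervalIntegrable (by fun_prop) _ _)]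
  simp [Real.sin_int_mul_pi]

lemma besselJ_rec (k : ℤ) (a : ℝ) :
    (k : ℝ) * besselJ k a
      + a * ((1 / π) * ∫ t in (0:ℝ)..π, Real.sin t * Real.sin ((k : ℝ) * t - a * Real.sin t))
    = a * besselJ (k - 1) a := by
  have point : ∀ t : ℝ, ((k : ℝ) - a * Real.cos t) * Real.cos ((k : ℝ) * t - a * Real.sin t)
      = (k : ℝ) * Real.cos ((k : ℝ) * t - a * Real.sin t)
        + a * (Real.sin t * Real.sin ((k : ℝ) * t - a * Real.sin t))
        - a * Real.cos (((k - 1 : ℤ) : ℝ) * t - a * Real.sin t) := by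
    intro t
    have h : (((k - 1 : ℤ) : ℝ)) * t - a * Real.sin t
        = ((k : ℝ) * t - a * Real.sin t) - t := by push_cast; ring
    have hcs := Real.cos_sub ((k : ℝ) * t - a * Real.sin t) t
    rw [h, hcs]; ring
  have hI1 : IntervalIntegrable
      (fun t : ℝ => (k : ℝ) * Real.cos ((k : ℝ) * t - a * Real.sin t))
      MeasureTheory.volume 0 π := Continuous.intervalIntegrable (by fun_prop) _ _
  have hI2 : IntervalIntegrable
      (fun t : ℝ => a * (Real.sin t * Real.sin ((k : ℝ) * t - a * Real.sin t)))
      MeasureTheory.volume 0 π := Continuous.intervalIntegrable (by fun_prop) _ _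
  have hI3 : IntervalIntegrable
      (fun t : ℝ => a * Real.cos (((k - 1 : ℤ) : ℝ) * t - a * Real.sin t))
      MeasureTheory.volume 0 π := Continuous.intervalIntegrable (by fun_prop) _ _
  have h0 : ((k : ℝ) * ∫ t in (0:ℝ)..π, Real.cos ((k : ℝ) * t - a * Real.sin t))
      + (a * ∫ t in (0:ℝ)..π, Real.sin t * Real.sin ((k : ℝ) * t - a * Real.sin t))
      - (a * ∫ t in (0:ℝ)..π, Real.cos (((k - 1 : ℤ) : ℝ) * t - a * Real.sin t)) = 0 := by
    rw [← intervalIntegral.integral_const_mul, ← intervalIntegral.integral_const_mul,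
      ← intervalIntegral.integral_const_mul, ← intervalIntegral.integral_add hI1 hI2,
      ← intervalIntegral.integral_sub (hI1.add hI2) hI3]
    exact (intervalIntegral.integral_congr fun t _ => (point t).symm).trans (key_integral k a)
  unfold besselJ
  have hπ : (π : ℝ) ≠ 0 := Real.pi_ne_zero
  field_simp at h0 ⊢
  linarith [h0]

lemma besselJ_deriv_aux (n : ℕ) (x : ℝ) :
    HasDerivAt (fun y : ℝ => y ^ (n + 1) * besselJ ((n : ℤ) + 1) y)
      (x ^ (n + 1) * besselJ (n : ℤ) x) x := by
  have h := (hasDerivAt_pow (n + 1) x).mul (besselJ_hasDerivAt ((n : ℤ) + 1) x)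
  refine h.congr_deriv ?_
  have hrec := besselJ_rec ((n : ℤ) + 1) x
  simp only [add_sub_cancel_right] at hrec
  push_cast at hrec ⊢
  linear_combination (x ^ n) * hrec

lemma besselJ_integral_eq (n : ℕ) (a : ℝ) :
    a ^ (n + 1) * besselJ ((n : ℤ) + 1) a
      = ∫ s in (0:ℝ)..a, s ^ (n + 1) * besselJ (n : ℤ) s := by
  rw [intervalIntegral.integral_eq_sub_of_hasDerivAt (fun s _ => besselJ_deriv_aux n s)
    (Continuous.intervalIntegrable ((continuous_pow _).mul (besselJ_continuous _)) _ _)]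
  simp

lemma besselJ_zero_lt (a : ℝ) (h0 : 0 < a) (h1 : a ≤ 1) : |besselJ 0 a| < 1 := by
  have hπ : (0:ℝ) < π := Real.pi_pos
  have hπ3 : (3:ℝ) < π := Real.pi_gt_three
  have hcos1 : 0 < Real.cos 1 :=
    Real.cos_pos_of_mem_Ioo ⟨by linarith, by linarith⟩
  have habs : ∀ t : ℝ, |a * Real.sin t| ≤ 1 := by
    intro t
    rw [abs_mul, abs_of_pos h0]
    calc a * |Real.sin t| ≤ 1 * 1 := by
          have := Real.abs_sin_le_one t
          nlinarith [abs_nonneg (Real.sin t)]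
      _ = 1 := by ring
  have hpoint : ∀ t : ℝ, Real.cos 1 ≤ Real.cos (((0:ℤ) : ℝ) * t - a * Real.sin t) := by
    intro t
    have h' : (((0:ℤ) : ℝ)) * t - a * Real.sin t = -(a * Real.sin t) := by push_cast; ring
    rw [h', Real.cos_neg, ← Real.cos_abs (a * Real.sin t)]
    exact Real.cos_le_cos_of_nonneg_of_le_pi (abs_nonneg _) (by linarith) (habs t)
  have hupper : (∫ t in (0:ℝ)..π, Real.cos (((0:ℤ) : ℝ) * t - a * Real.sin t))
      < ∫ t in (0:ℝ)..π, (1:ℝ) := by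
    apply intervalIntegral.integral_lt_integral_of_continuousOn_of_le_of_exists_lt hπ
      (cont_param 0 a).continuousOn continuousOn_const
      (fun t _ => Real.cos_le_one _)
    refine ⟨π / 2, ⟨by linarith, by linarith⟩, ?_⟩
    have : (((0:ℤ) : ℝ)) * (π / 2) - a * Real.sin (π / 2) = -a := by
      simp [Real.sin_pi_div_two]
    rw [this, Real.cos_neg]
    calc Real.cos a < Real.cos 0 :=
          Real.cos_lt_cos_of_nonneg_of_le_pi le_rfl (by linarith) h0
      _ = 1 := Real.cos_zero
  have hlower : (∫ t in (0:ℝ)..π, Real.cos 1)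
      ≤ ∫ t in (0:ℝ)..π, Real.cos (((0:ℤ) : ℝ) * t - a * Real.sin t) := by
    apply intervalIntegral.integral_mono_on hπ.le intervalIntegrable_const
      ((cont_param 0 a).intervalIntegrable _ _)
    exact fun t _ => hpoint t
  have hIconst : (∫ t in (0:ℝ)..π, Real.cos 1) = π * Real.cos 1 := by
    simp [mul_comm]
  have hI1 : (∫ t in (0:ℝ)..π, (1:ℝ)) = π := by simp
  set I := ∫ t in (0:ℝ)..π, Real.cos (((0:ℤ) : ℝ) * t - a * Real.sin t) with hI
  have hIpos : 0 < I := by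
    rw [hIconst] at hlower; nlinarith
  have hIlt : I < π := by rw [hI1] at hupper; exact hupper
  have hval : besselJ 0 a = (1 / π) * I := rfl
  rw [hval, abs_of_pos (by positivity)]
  rw [show (1 / π) * I = I / π by ring, div_lt_one hπ]
  exact hIlt

lemma besselJ_nat_lt (n : ℕ) : ∀ a : ℝ, 0 < a → a ≤ 1 →
    |besselJ (n : ℤ) a| < a ^ n / (n.factorial * 2 ^ n) := by
  induction n with
  | zero =>
    intro a h0 h1
    simpa using besselJ_zero_lt a h0 h1
  | succ n ih =>
    intro a h0 h1
    have hC : (0:ℝ) < (n.factorial : ℝ) * 2 ^ n := by positivity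
    have h2 : |∫ s in (0:ℝ)..a, s ^ (n + 1) * besselJ (n : ℤ) s|
        ≤ ∫ s in (0:ℝ)..a, |s ^ (n + 1) * besselJ (n : ℤ) s| :=
      intervalIntegral.abs_integral_le_integral_abs h0.le
    have h3 : (∫ s in (0:ℝ)..a, |s ^ (n + 1) * besselJ (n : ℤ) s|)
        < ∫ s in (0:ℝ)..a, s ^ (n + 1) * (s ^ n / ((n.factorial : ℝ) * 2 ^ n)) := by
      apply intervalIntegral.integral_lt_integral_of_continuousOn_of_le_of_exists_lt h0
        ((continuous_pow _).mul (besselJ_continuous _)).abs.continuousOn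
        (((continuous_pow (n + 1)).mul
          ((continuous_pow n).div_const _)).continuousOn)
      · intro s hs
        simp only [Pi.mul_apply]
        rw [abs_mul, abs_of_nonneg (pow_nonneg hs.1.le _)]
        exact mul_le_mul_of_nonneg_left (ih s hs.1 (hs.2.trans h1)).le
          (pow_nonneg hs.1.le _)
      · refine ⟨a, ⟨h0.le, le_refl a⟩, ?_⟩
        simp only [Pi.mul_apply]
        rw [abs_mul, abs_of_nonneg (pow_nonneg h0.le _)]
        exact mul_lt_mul_of_pos_left (ih a h0 h1) (pow_pos h0 _)
    have h4 : (∫ s in (0:ℝ)..a, s ^ (n + 1) * (s ^ n / ((n.factorial : ℝ) * 2 ^ n)))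
        = a ^ (2 * n + 2) / ((2 * n + 2) * ((n.factorial : ℝ) * 2 ^ n)) := by
      have hfe : (fun s : ℝ => s ^ (n + 1) * (s ^ n / ((n.factorial : ℝ) * 2 ^ n)))
          = fun s : ℝ => (1 / ((n.factorial : ℝ) * 2 ^ n)) * s ^ (2 * n + 1) := by
        funext s
        field_simp
        ring
      rw [hfe, intervalIntegral.integral_const_mul, integral_pow]
      push_cast
      field_simp
      ring
    have h5 : a ^ (n + 1) * |besselJ ((n : ℤ) + 1) a|
        < a ^ (2 * n + 2) / ((2 * n + 2) * ((n.factorial : ℝ) * 2 ^ n)) := by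
      rw [← abs_of_pos (pow_pos h0 (n + 1)), ← abs_mul, besselJ_integral_eq]
      calc |∫ s in (0:ℝ)..a, s ^ (n + 1) * besselJ (n : ℤ) s|
          ≤ ∫ s in (0:ℝ)..a, |s ^ (n + 1) * besselJ (n : ℤ) s| := h2
        _ < ∫ s in (0:ℝ)..a, s ^ (n + 1) * (s ^ n / ((n.factorial : ℝ) * 2 ^ n)) := h3
        _ = _ := h4
    have hD : ((n + 1).factorial : ℝ) * 2 ^ (n + 1)
        = (2 * n + 2) * ((n.factorial : ℝ) * 2 ^ n) := by
      rw [Nat.factorial_succ]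
      push_cast
      ring
    have hcast : ((n + 1 : ℕ) : ℤ) = (n : ℤ) + 1 := by push_cast; ring
    rw [hcast]
    have hpow : (0:ℝ) < a ^ (n + 1) := pow_pos h0 _
    refine lt_of_mul_lt_mul_left ?_ hpow.le
    calc a ^ (n + 1) * |besselJ ((n : ℤ) + 1) a|
        < a ^ (2 * n + 2) / ((2 * n + 2) * ((n.factorial : ℝ) * 2 ^ n)) := h5
      _ = a ^ (n + 1) * (a ^ (n + 1) / (((n + 1).factorial : ℝ) * 2 ^ (n + 1))) := by
          rw [hD]
          have hpos : (0:ℝ) < (2 * n + 2) * ((n.factorial : ℝ) * 2 ^ n) := by positivity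
          field_simp
          ring

lemma besselJ_neg_neg (k : ℤ) (a : ℝ) : besselJ (-k) (-a) = besselJ k a := by
  unfold besselJ
  congr 1
  apply intervalIntegral.integral_congr
  intro t _
  show Real.cos (((-k : ℤ) : ℝ) * t - (-a) * Real.sin t)
      = Real.cos ((k : ℝ) * t - a * Real.sin t)
  have h : ((-k : ℤ) : ℝ) * t - (-a) * Real.sin t = -((k : ℝ) * t - a * Real.sin t) := by
    push_cast; ring
  rw [h, Real.cos_neg]

lemma abs_besselJ_neg_arg (k : ℤ) (a : ℝ) : |besselJ k (-a)| = |besselJ k a| := by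
  have hsub : (∫ t in (0:ℝ)..π, Real.cos ((k : ℝ) * t - (-a) * Real.sin t))
      = ∫ t in (0:ℝ)..π, Real.cos ((k : ℝ) * (π - t) - (-a) * Real.sin (π - t)) := by
    rw [intervalIntegral.integral_comp_sub_left
      (fun t => Real.cos ((k : ℝ) * t - (-a) * Real.sin t)) π]
    norm_num
  have hpt : ∀ t : ℝ, Real.cos ((k : ℝ) * (π - t) - (-a) * Real.sin (π - t))
      = (-1 : ℝ) ^ k * Real.cos ((k : ℝ) * t - a * Real.sin t) := by
    intro t
    have h1 : (k : ℝ) * (π - t) - (-a) * Real.sin (π - t)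
        = (k : ℝ) * π - ((k : ℝ) * t - a * Real.sin t) := by
      rw [Real.sin_pi_sub]; ring
    rw [h1, Real.cos_int_mul_pi_sub]
  have heq : besselJ k (-a) = (-1 : ℝ) ^ k * besselJ k a := by
    unfold besselJ
    rw [hsub, intervalIntegral.integral_congr (fun t _ => hpt t),
      intervalIntegral.integral_const_mul]
    ring
  rw [heq, abs_mul]
  have h1 : |(-1 : ℝ) ^ k| = 1 := by
    rcases Int.even_or_odd k with hk | hk
    · rw [hk.neg_one_zpow, abs_one]
    · rw [hk.neg_one_zpow, abs_neg, abs_one]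
  rw [h1, one_mul]

lemma abs_besselJ_reduce (k : ℤ) (a : ℝ) :
    |besselJ k a| = |besselJ (k.natAbs : ℤ) (|a|)| := by
  have hflip : ∀ (m : ℤ) (b : ℝ), |besselJ m b| = |besselJ (-m) b| := by
    intro m b
    rw [← besselJ_neg_neg m b, abs_besselJ_neg_arg]
  rcases le_or_gt 0 k with hk | hk
  · rw [Int.natAbs_of_nonneg hk]
    rcases le_or_gt 0 a with ha | ha
    · rw [abs_of_nonneg ha]
    · rw [abs_of_neg ha, abs_besselJ_neg_arg]
  · have hnat : (k.natAbs : ℤ) = -k := by omega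
    rw [hnat, hflip k a]
    rcases le_or_gt 0 a with ha | ha
    · rw [abs_of_nonneg ha]
    · rw [abs_of_neg ha, abs_besselJ_neg_arg]

lemma besselJ_bound (k : ℤ) (a : ℝ) (h0 : 0 < |a|) (h1 : |a| ≤ 1) :
    |besselJ k a| < 1 / ((k.natAbs.factorial : ℝ) * 2 ^ k.natAbs) := by
  rw [abs_besselJ_reduce]
  calc |besselJ (k.natAbs : ℤ) (|a|)|
      < |a| ^ k.natAbs / ((k.natAbs.factorial : ℝ) * 2 ^ k.natAbs) :=
        besselJ_nat_lt k.natAbs |a| h0 h1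
    _ ≤ 1 / ((k.natAbs.factorial : ℝ) * 2 ^ k.natAbs) := by
        gcongr
        exact pow_le_one₀ (abs_nonneg a) h1


theorem amp_upper_bound_of_le_one (n : ℕ) (hn : 1 ≤ n) (a : Fin n → ℝ)
    (ha : ∀ i, 0 < |a i| ∧ |a i| ≤ 1) (k : Fin n → ℤ) :
    |amp a k| <
      1 / ((∏ i, ((k i).natAbs.factorial : ℝ)) * 2 ^ (∑ i, (k i).natAbs)) := by
  set b : Fin n → ℝ := fun i => 1 / (((k i).natAbs.factorial : ℝ) * 2 ^ (k i).natAbs) with hb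
  have hbpos : ∀ i, 0 < b i := fun i => by positivity
  have hlt : ∀ i, |besselJ (k i) (a i)| < b i := fun i =>
    besselJ_bound (k i) (a i) (ha i).1 (ha i).2
  have hRHS : (1:ℝ) / ((∏ i, ((k i).natAbs.factorial : ℝ)) * 2 ^ (∑ i, (k i).natAbs))
      = ∏ i, b i := by
    rw [hb, ← Finset.prod_pow_eq_pow_sum, ← Finset.prod_mul_distrib]
    rw [eq_comm]
    have hsplit : (∏ i, (1:ℝ) / (((k i).natAbs.factorial : ℝ) * 2 ^ (k i).natAbs))
        = (∏ _i : Fin n, (1:ℝ)) / ∏ i, (((k i).natAbs.factorial : ℝ) * 2 ^ (k i).natAbs) :=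
      Finset.prod_div_distrib _ _
    rw [hsplit]
    simp
  rw [hRHS]
  unfold amp
  rw [Finset.abs_prod]
  let i0 : Fin n := ⟨0, hn⟩
  rw [← Finset.mul_prod_erase Finset.univ _ (Finset.mem_univ i0),
    ← Finset.mul_prod_erase Finset.univ b (Finset.mem_univ i0)]
  have hprodle : (∏ i ∈ Finset.univ.erase i0, |besselJ (k i) (a i)|)
      ≤ ∏ i ∈ Finset.univ.erase i0, b i :=
    Finset.prod_le_prod (fun i _ => abs_nonneg _) (fun i _ => (hlt i).le)
  have hprodpos : (0:ℝ) < ∏ i ∈ Finset.univ.erase i0, b i :=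
    Finset.prod_pos fun i _ => hbpos i
  calc |besselJ (k i0) (a i0)| * ∏ i ∈ Finset.univ.erase i0, |besselJ (k i) (a i)|
      ≤ |besselJ (k i0) (a i0)| * ∏ i ∈ Finset.univ.erase i0, b i :=
        mul_le_mul_of_nonneg_left hprodle (abs_nonneg _)
    _ < b i0 * ∏ i ∈ Finset.univ.erase i0, b i :=
        mul_lt_mul_of_pos_right (hlt i0) hprodpos
end

section
/- For every integer k ≥ 0 and every real a with 0 < a ≤ π/2, the Bessel function value J_k(a) is strictly positive. -/
open Real

noncomputable def besselI (n : ℕ) (a : ℝ) : ℝ :=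
  ∫ t in (0:ℝ)..π, Real.cos (n * t - a * Real.sin t)

lemma cont_aux (n : ℕ) (a : ℝ) :
    Continuous fun t : ℝ => Real.cos (n * t - a * Real.sin t) := by fun_prop

lemma hasDerivAt_inner (n : ℕ) (t x : ℝ) :
    HasDerivAt (fun x : ℝ => Real.cos (n * t - x * Real.sin t))
      (Real.sin t * Real.sin (n * t - x * Real.sin t)) x := by
  have hu : HasDerivAt (fun x : ℝ => (n : ℝ) * t - x * Real.sin t) (-Real.sin t) x := by
    simpa using ((hasDerivAt_id x).mul_const (Real.sin t)).const_sub ((n : ℝ) * t)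
  have := (Real.hasDerivAt_cos ((n : ℝ) * t - x * Real.sin t)).comp x hu
  refine this.congr_deriv ?_
  ring

lemma besselI_hasDerivAt (n : ℕ) (a : ℝ) :
    HasDerivAt (besselI n)
      (∫ t in (0:ℝ)..π, Real.sin t * Real.sin (n * t - a * Real.sin t)) a := by
  have h := intervalIntegral.hasDerivAt_integral_of_dominated_loc_of_deriv_le
    (F := fun x t => Real.cos (n * t - x * Real.sin t))
    (F' := fun x t => Real.sin t * Real.sin (n * t - x * Real.sin t))
    (a := 0) (b := π) (μ := MeasureTheory.volume) (bound := fun _ => 1)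
    (x₀ := a) Filter.univ_mem
    (Filter.Eventually.of_forall fun x => (cont_aux n x).aestronglyMeasurable)
    ((cont_aux n a).intervalIntegrable 0 π)
    (Continuous.aestronglyMeasurable (by fun_prop))
    (Filter.Eventually.of_forall fun t _ x _ => by
      rw [Real.norm_eq_abs, abs_mul]
      exact mul_le_one₀ (Real.abs_sin_le_one t) (abs_nonneg _) (Real.abs_sin_le_one _))
    (intervalIntegrable_const)
    (Filter.Eventually.of_forall fun t _ x _ => hasDerivAt_inner n t x)
  exact h.2

lemma besselI_continuous (n : ℕ) : Continuous (besselI n) :=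
  continuous_iff_continuousAt.2 fun a => (besselI_hasDerivAt n a).continuousAt

lemma lemA (n : ℕ) (a : ℝ) :
    (n : ℝ) * besselI n a
      = a * ∫ t in (0:ℝ)..π, Real.cos t * Real.cos (n * t - a * Real.sin t) := by
  have key := intervalIntegral.integral_eq_sub_of_hasDerivAt
    (f := fun t : ℝ => Real.sin ((n : ℝ) * t - a * Real.sin t))
    (f' := fun t : ℝ => ((n : ℝ) - a * Real.cos t) * Real.cos (n * t - a * Real.sin t))
    (a := 0) (b := π)
    (fun t _ => by
      have hu : HasDerivAt (fun t : ℝ => (n : ℝ) * t - a * Real.sin t)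
          ((n : ℝ) - a * Real.cos t) t := by
        simpa using ((hasDerivAt_id t).const_mul (n : ℝ)).fun_sub
          ((Real.hasDerivAt_sin t).const_mul a)
      have h2 := (Real.hasDerivAt_sin ((n : ℝ) * t - a * Real.sin t)).comp t hu
      refine h2.congr_deriv ?_
      ring)
    ((by fun_prop : Continuous fun t : ℝ =>
        ((n : ℝ) - a * Real.cos t) * Real.cos (n * t - a * Real.sin t)).intervalIntegrable 0 π)
  have hz : (Real.sin ((n : ℝ) * π - a * Real.sin π) - Real.sin ((n : ℝ) * 0 - a * Real.sin 0)) = 0 := by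
    simp [Real.sin_pi, Real.sin_nat_mul_pi]
  rw [hz] at key
  have expand : ∫ t in (0:ℝ)..π, ((n : ℝ) - a * Real.cos t) * Real.cos (n * t - a * Real.sin t)
      = (n : ℝ) * besselI n a
        - a * ∫ t in (0:ℝ)..π, Real.cos t * Real.cos (n * t - a * Real.sin t) := by
    rw [besselI, ← intervalIntegral.integral_const_mul, ← intervalIntegral.integral_const_mul,
      ← intervalIntegral.integral_sub
        ((by fun_prop : Continuous fun t : ℝ =>
          (n : ℝ) * Real.cos (n * t - a * Real.sin t)).intervalIntegrable 0 π)
        ((by fun_prop : Continuous fun t : ℝ =>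
          a * (Real.cos t * Real.cos (n * t - a * Real.sin t))).intervalIntegrable 0 π)]
    congr 1
    funext t
    ring
  rw [expand] at key
  linarith

lemma lemB (n : ℕ) (a : ℝ) :
    besselI n a
      = (∫ t in (0:ℝ)..π, Real.cos t * Real.cos ((n + 1 : ℕ) * t - a * Real.sin t))
        + ∫ t in (0:ℝ)..π, Real.sin t * Real.sin ((n + 1 : ℕ) * t - a * Real.sin t) := by
  rw [← intervalIntegral.integral_add
      ((by fun_prop : Continuous fun t : ℝ =>
        Real.cos t * Real.cos ((n + 1 : ℕ) * t - a * Real.sin t)).intervalIntegrable 0 π)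
      ((by fun_prop : Continuous fun t : ℝ =>
        Real.sin t * Real.sin ((n + 1 : ℕ) * t - a * Real.sin t)).intervalIntegrable 0 π)]
  unfold besselI
  congr 1
  funext t
  have : (n : ℝ) * t - a * Real.sin t = (((n + 1 : ℕ) : ℝ) * t - a * Real.sin t) - t := by
    push_cast; ring
  rw [this, Real.cos_sub]
  ring

lemma Phi_hasDerivAt (n : ℕ) (a : ℝ) :
    HasDerivAt (fun x : ℝ => x ^ (n + 1) * besselI (n + 1) x)
      (a ^ (n + 1) * besselI n a) a := by
  have h := (hasDerivAt_pow (n + 1) a).fun_mul (besselI_hasDerivAt (n + 1) a)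
  refine h.congr_deriv ?_
  symm
  rw [lemB n a]
  have hA := lemA (n + 1) a
  simp only [Nat.add_sub_cancel] at *
  push_cast at hA ⊢
  linear_combination (-(a ^ n)) * hA

lemma Phi_integral (n : ℕ) (a : ℝ) :
    a ^ (n + 1) * besselI (n + 1) a
      = ∫ s in (0:ℝ)..a, s ^ (n + 1) * besselI n s := by
  rw [intervalIntegral.integral_eq_sub_of_hasDerivAt (fun s _ => Phi_hasDerivAt n s)
    (((continuous_pow (n + 1)).mul (besselI_continuous n)).intervalIntegrable 0 a)]
  simp

lemma besselI_zero_pos {s : ℝ} (hs0 : 0 < s) (hs : s ≤ π / 2) : 0 < besselI 0 s := by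
  have hlow : ∀ t ∈ Set.uIcc (0:ℝ) π, 1 - π ^ 2 / 8 * Real.sin t ^ 2
      ≤ Real.cos ((0 : ℕ) * t - s * Real.sin t) := by
    intro t _
    have h1 : 1 - (s * Real.sin t) ^ 2 / 2 ≤ Real.cos (s * Real.sin t) :=
      Real.one_sub_sq_div_two_le_cos
    have h2 : ((0 : ℕ) : ℝ) * t - s * Real.sin t = -(s * Real.sin t) := by push_cast; ring
    rw [h2, Real.cos_neg]
    have hs2 : s ^ 2 ≤ π ^ 2 / 4 := by nlinarith [Real.pi_pos]
    nlinarith [Real.sin_sq_le_one t, sq_nonneg (Real.sin t)]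
  have hmono : (∫ t in (0:ℝ)..π, (1 - π ^ 2 / 8 * Real.sin t ^ 2))
      ≤ ∫ t in (0:ℝ)..π, Real.cos ((0 : ℕ) * t - s * Real.sin t) := by
    apply intervalIntegral.integral_mono_on Real.pi_pos.le
    · exact (by fun_prop : Continuous fun t : ℝ =>
        1 - π ^ 2 / 8 * Real.sin t ^ 2).intervalIntegrable 0 π
    · exact (cont_aux 0 s).intervalIntegrable 0 π
    · intro t ht
      exact hlow t (Set.mem_uIcc_of_le ht.1 ht.2)
  have hcalc : (∫ t in (0:ℝ)..π, (1 - π ^ 2 / 8 * Real.sin t ^ 2))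
      = π - π ^ 2 / 8 * (π / 2) := by
    rw [intervalIntegral.integral_sub intervalIntegrable_const
        (((by fun_prop : Continuous fun t : ℝ => π ^ 2 / 8 * Real.sin t ^ 2)).intervalIntegrable 0 π),
      intervalIntegral.integral_const_mul, integral_sin_sq]
    simp [Real.sin_pi]
  have hpos : 0 < π - π ^ 2 / 8 * (π / 2) := by
    nlinarith [Real.pi_gt_d6, Real.pi_lt_d2]
  unfold besselI
  calc (0:ℝ) < π - π ^ 2 / 8 * (π / 2) := hpos
    _ = ∫ t in (0:ℝ)..π, (1 - π ^ 2 / 8 * Real.sin t ^ 2) := hcalc.symm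
    _ ≤ _ := hmono

lemma besselI_pos (n : ℕ) : ∀ s : ℝ, 0 < s → s ≤ π / 2 → 0 < besselI n s := by
  induction n with
  | zero => exact fun s hs0 hs => besselI_zero_pos hs0 hs
  | succ n ih =>
    intro a ha0 ha
    have hkey := Phi_integral n a
    have hpos : 0 < ∫ s in (0:ℝ)..a, s ^ (n + 1) * besselI n s := by
      apply intervalIntegral.intervalIntegral_pos_of_pos_on
        (((continuous_pow (n + 1)).mul (besselI_continuous n)).intervalIntegrable 0 a)
        _ ha0
      intro s hs
      exact mul_pos (pow_pos hs.1 _) (ih s hs.1 (le_trans hs.2.le ha))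
    rw [← hkey] at hpos
    have hpow : 0 < a ^ (n + 1) := pow_pos ha0 _
    by_contra hcon
    push_neg at hcon
    nlinarith

theorem besselJ_pos (k : ℤ) (hk : 0 ≤ k) (a : ℝ) (ha0 : 0 < a)
    (ha : a ≤ π / 2) : 0 < besselJ k a := by
  have hcast : ((k.toNat : ℕ) : ℝ) = ((k : ℤ) : ℝ) := by
    exact_mod_cast congrArg (Int.cast : ℤ → ℝ) (Int.toNat_of_nonneg hk)
  have : besselJ k a = (1 / π) * besselI k.toNat a := by
    unfold besselJ besselI
    rw [← hcast]
  rw [this]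
  exact mul_pos (by positivity) (besselI_pos k.toNat a ha0 ha)
end

section
/- (Sorting of Bessel amplitudes, away from index 0.) Let a ∈ ℝ with 0 < |a| ≤ π/2, and let k, l ∈ ℤ with 1 ≤ |k| < |l|. Then |J_k(a)| > |J_l(a)|. -/
open Real

lemma bessel_cont (k : ℤ) (a : ℝ) :
    Continuous fun t : ℝ => Real.cos ((k:ℝ) * t - a * Real.sin t) := by fun_prop

lemma abs_besselJ_le_one (k : ℤ) (a : ℝ) : |besselJ k a| ≤ 1 := by
  have hπ : (0:ℝ) < π := Real.pi_pos
  have h : |∫ t in (0:ℝ)..π, Real.cos ((k:ℝ) * t - a * Real.sin t)| ≤ π := by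
    have := intervalIntegral.norm_integral_le_of_norm_le_const (C := 1)
      (f := fun t : ℝ => Real.cos ((k:ℝ) * t - a * Real.sin t)) (a := 0) (b := π)
      (fun x _ => by rw [Real.norm_eq_abs]; exact Real.abs_cos_le_one _)
    rw [Real.norm_eq_abs] at this
    simpa [abs_of_pos hπ] using this
  rw [besselJ, abs_mul, abs_of_pos (show (0:ℝ) < 1/π by positivity)]
  rw [one_div, inv_mul_le_iff₀ hπ, mul_one]
  exact h

lemma besselJ_recurrence (k : ℤ) (a : ℝ) (ha : a ≠ 0) :
    besselJ (k - 1) a + besselJ (k + 1) a = (2 * k / a) * besselJ k a := by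
  have hπ : (0:ℝ) < π := Real.pi_pos
  -- derivative of sin(kt - a sin t)
  have hderiv : ∀ t : ℝ, HasDerivAt (fun t => Real.sin ((k:ℝ) * t - a * Real.sin t))
      (((k:ℝ) - a * Real.cos t) * Real.cos ((k:ℝ) * t - a * Real.sin t)) t := by
    intro t
    have h1 : HasDerivAt (fun t : ℝ => (k:ℝ) * t - a * Real.sin t)
        ((k:ℝ) - a * Real.cos t) t := by
      simpa using ((hasDerivAt_id t).const_mul (k:ℝ)).fun_sub
        ((Real.hasDerivAt_sin t).const_mul a)
    simpa [mul_comm] using h1.sin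
  have hint : (∫ t in (0:ℝ)..π,
      ((k:ℝ) - a * Real.cos t) * Real.cos ((k:ℝ) * t - a * Real.sin t)) = 0 := by
    rw [intervalIntegral.integral_eq_sub_of_hasDerivAt (fun t _ => hderiv t)
      (Continuous.intervalIntegrable (by fun_prop) _ _)]
    simp [Real.sin_pi]
  have hsplit : (∫ t in (0:ℝ)..π,
        ((k:ℝ) - a * Real.cos t) * Real.cos ((k:ℝ) * t - a * Real.sin t))
      = (k:ℝ) * (∫ t in (0:ℝ)..π, Real.cos ((k:ℝ) * t - a * Real.sin t))
        - a * ∫ t in (0:ℝ)..π, Real.cos t * Real.cos ((k:ℝ) * t - a * Real.sin t) := by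
    rw [← intervalIntegral.integral_const_mul, ← intervalIntegral.integral_const_mul,
        ← intervalIntegral.integral_sub
          (Continuous.intervalIntegrable (by fun_prop) _ _)
          (Continuous.intervalIntegrable (by fun_prop) _ _)]
    apply intervalIntegral.integral_congr
    intro t _
    ring
  have hprod : (∫ t in (0:ℝ)..π, Real.cos t * Real.cos ((k:ℝ) * t - a * Real.sin t))
      = ((∫ t in (0:ℝ)..π, Real.cos ((((k + 1 : ℤ)):ℝ) * t - a * Real.sin t))
        + (∫ t in (0:ℝ)..π, Real.cos ((((k - 1 : ℤ)):ℝ) * t - a * Real.sin t))) / 2 := by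
    rw [← intervalIntegral.integral_add
          (Continuous.intervalIntegrable (by fun_prop) _ _)
          (Continuous.intervalIntegrable (by fun_prop) _ _),
        ← intervalIntegral.integral_div]
    apply intervalIntegral.integral_congr
    intro t _
    show Real.cos t * Real.cos ((k:ℝ) * t - a * Real.sin t)
        = (Real.cos ((((k + 1 : ℤ)):ℝ) * t - a * Real.sin t)
          + Real.cos ((((k - 1 : ℤ)):ℝ) * t - a * Real.sin t)) / 2
    have e1 : (((k + 1 : ℤ)):ℝ) * t - a * Real.sin t = ((k:ℝ) * t - a * Real.sin t) + t := by
      push_cast; ring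
    have e2 : (((k - 1 : ℤ)):ℝ) * t - a * Real.sin t = ((k:ℝ) * t - a * Real.sin t) - t := by
      push_cast; ring
    have h1 := Real.cos_add ((k:ℝ) * t - a * Real.sin t) t
    have h2 := Real.cos_sub ((k:ℝ) * t - a * Real.sin t) t
    rw [e1, e2, h1, h2]
    ring
  have hkey : (k:ℝ) * (∫ t in (0:ℝ)..π, Real.cos ((k:ℝ) * t - a * Real.sin t))
      = a * (((∫ t in (0:ℝ)..π, Real.cos ((((k + 1 : ℤ)):ℝ) * t - a * Real.sin t))
        + (∫ t in (0:ℝ)..π, Real.cos ((((k - 1 : ℤ)):ℝ) * t - a * Real.sin t))) / 2) := by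
    have h := hint
    rw [hsplit, hprod] at h
    linarith
  rw [besselJ, besselJ, besselJ]
  field_simp
  push_cast at hkey ⊢
  linear_combination (-2) * hkey

lemma besselJ_decay (a : ℝ) (ha0 : 0 < a) (ha : a ≤ π / 2) (m : ℤ) (hm : 1 ≤ m) :
    ∀ j : ℤ, m + 1 ≤ j → |besselJ j a| ≤ a / ((m:ℝ) + 1) * |besselJ m a| := by
  have hm1 : (2:ℝ) ≤ (m:ℝ) + 1 := by
    have : (1:ℝ) ≤ (m:ℝ) := by exact_mod_cast hm
    linarith
  set r := a / ((m:ℝ) + 1) with hr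
  have hr0 : 0 < r := div_pos ha0 (by linarith)
  have hr1 : r < 1 := by
    rw [hr, div_lt_one (by linarith)]
    have h4 : π < 3.15 := Real.pi_lt_d2
    linarith
  have aux : ∀ N : ℕ, ∀ j : ℤ, m + 1 ≤ j →
      |besselJ j a| ≤ r * |besselJ m a| + r ^ N := by
    intro N
    induction N with
    | zero =>
      intro j _
      have := abs_besselJ_le_one j a
      have := mul_nonneg hr0.le (abs_nonneg (besselJ m a))
      simpa using by linarith
    | succ N ih =>
      intro j hj
      have hj0 : (0:ℝ) < (j:ℝ) := by
        have : (2:ℤ) ≤ j := by omega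
        have : (2:ℝ) ≤ (j:ℝ) := by exact_mod_cast this
        linarith
      have hrec := besselJ_recurrence j a (ne_of_gt ha0)
      have hJj : besselJ j a = a / (2*(j:ℝ)) * (besselJ (j-1) a + besselJ (j+1) a) := by
        rw [hrec]
        have hj0' : (j:ℝ) ≠ 0 := ne_of_gt hj0
        field_simp
      have h1 : |besselJ j a| ≤ a/(2*(j:ℝ)) * (|besselJ (j-1) a| + |besselJ (j+1) a|) := by
        rw [hJj, abs_mul, abs_of_pos (by positivity : (0:ℝ) < a/(2*(j:ℝ)))]
        exact mul_le_mul_of_nonneg_left (abs_add_le _ _) (by positivity)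
      have h2 : a/(2*(j:ℝ)) ≤ r/2 := by
        have hmj : ((m:ℝ) + 1) ≤ (j:ℝ) := by
          have : m + 1 ≤ j := hj
          exact_mod_cast this
        rw [hr, div_div]
        exact div_le_div_of_nonneg_left ha0.le (by linarith) (by linarith)
      have h3 : |besselJ (j+1) a| ≤ r * |besselJ m a| + r ^ N := ih (j+1) (by omega)
      have hpN : (0:ℝ) ≤ r ^ N := pow_nonneg hr0.le N
      have hbm : (0:ℝ) ≤ |besselJ m a| := abs_nonneg _
      have h4 : |besselJ (j-1) a| ≤ |besselJ m a| + r ^ N := by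
        rcases eq_or_lt_of_le hj with h | h
        · have hjm : j - 1 = m := by omega
          rw [hjm]; linarith
        · have := ih (j-1) (by omega)
          nlinarith
      have hsum : (0:ℝ) ≤ |besselJ (j-1) a| + |besselJ (j+1) a| := by positivity
      calc |besselJ j a| ≤ a/(2*(j:ℝ)) * (|besselJ (j-1) a| + |besselJ (j+1) a|) := h1
        _ ≤ r/2 * (|besselJ (j-1) a| + |besselJ (j+1) a|) :=
            mul_le_mul_of_nonneg_right h2 hsum
        _ ≤ r/2 * ((|besselJ m a| + r^N) + (r * |besselJ m a| + r^N)) := by nlinarith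
        _ ≤ r * |besselJ m a| + r^(N+1) := by
            nlinarith [pow_succ r N, mul_nonneg (mul_nonneg hr0.le (sub_nonneg.mpr hr1.le)) hbm]
  intro j hj
  have htend : Filter.Tendsto (fun N : ℕ => r * |besselJ m a| + r ^ N) Filter.atTop
      (nhds (r * |besselJ m a| + 0)) :=
    Filter.Tendsto.const_add _ (tendsto_pow_atTop_nhds_zero_of_lt_one hr0.le hr1)
  have h := ge_of_tendsto' htend (fun N => aux N j hj)
  simpa using h

lemma besselJ_zero_pos (a : ℝ) (ha0 : 0 < a) (ha : a ≤ π / 2) : 0 < besselJ 0 a := by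
  have hπ : (0:ℝ) < π := Real.pi_pos
  have e : besselJ 0 a = (1/π) * ∫ t in (0:ℝ)..π, Real.cos (a * Real.sin t) := by
    rw [besselJ]
    congr 1
    apply intervalIntegral.integral_congr
    intro t _
    simp
  have hint1 : IntervalIntegrable (fun t => Real.cos (a * Real.sin t)) MeasureTheory.volume 0 (π/2) :=
    Continuous.intervalIntegrable (by fun_prop) _ _
  have hint2 : IntervalIntegrable (fun t => Real.cos (a * Real.sin t)) MeasureTheory.volume (π/2) π :=
    Continuous.intervalIntegrable (by fun_prop) _ _
  have h1 : 0 < ∫ t in (0:ℝ)..(π/2), Real.cos (a * Real.sin t) := by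
    apply intervalIntegral.intervalIntegral_pos_of_pos_on hint1 _ (by linarith)
    intro t ht
    apply Real.cos_pos_of_mem_Ioo
    have hs0 : 0 < Real.sin t := Real.sin_pos_of_pos_of_lt_pi ht.1 (by linarith [ht.2])
    have hs1 : Real.sin t < 1 := by
      have := Real.sin_lt_sin_of_lt_of_le_pi_div_two (x := t) (y := π/2)
        (by linarith [ht.1]) (le_refl _) ht.2
      simpa using this
    constructor
    · nlinarith
    · nlinarith
  have h2 : 0 ≤ ∫ t in (π/2:ℝ)..π, Real.cos (a * Real.sin t) := by
    apply intervalIntegral.integral_nonneg (by linarith)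
    intro t ht
    apply Real.cos_nonneg_of_mem_Icc
    have hs0 : 0 ≤ Real.sin t := Real.sin_nonneg_of_nonneg_of_le_pi (by linarith [ht.1]) ht.2
    have hs1 : Real.sin t ≤ 1 := Real.sin_le_one t
    constructor
    · nlinarith
    · nlinarith
  rw [e, ← intervalIntegral.integral_add_adjacent_intervals hint1 hint2]
  have := add_pos_of_pos_of_nonneg h1 h2
  positivity

lemma besselJ_down (a : ℝ) (ha : a ≠ 0) :
    ∀ n : ℕ, besselJ n a = 0 → besselJ ((n:ℤ) + 1) a = 0 → besselJ 0 a = 0 := by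
  intro n
  induction n with
  | zero => intro h _; exact_mod_cast h
  | succ n ih =>
    intro h1 h2
    have hrec := besselJ_recurrence ((n:ℤ) + 1) a ha
    have e1 : ((n:ℤ) + 1) - 1 = (n:ℤ) := by ring
    have e2 : ((n:ℤ) + 1) + 1 = (n:ℤ) + 2 := by ring
    rw [e1, e2] at hrec
    have h1' : besselJ ((n:ℤ) + 1) a = 0 := by
      have : ((n + 1 : ℕ) : ℤ) = (n:ℤ) + 1 := by push_cast; ring
      rwa [this] at h1
    have h2' : besselJ ((n:ℤ) + 2) a = 0 := by
      have : ((n + 1 : ℕ) : ℤ) + 1 = (n:ℤ) + 2 := by push_cast; ring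
      rwa [this] at h2
    apply ih
    · rw [h1', h2'] at hrec
      simpa using hrec
    · exact h1'

lemma besselJ_nonzero (a : ℝ) (ha0 : 0 < a) (ha : a ≤ π / 2) (k : ℤ) (hk : 1 ≤ k) :
    besselJ k a ≠ 0 := by
  intro h0
  have hd := besselJ_decay a ha0 ha k hk (k + 1) (le_refl _)
  rw [h0] at hd
  simp at hd
  have h1 : besselJ (k + 1) a = 0 := hd
  obtain ⟨n, rfl⟩ : ∃ n : ℕ, k = (n:ℤ) := ⟨k.toNat, (Int.toNat_of_nonneg (by omega)).symm⟩
  exact absurd (besselJ_down a (ne_of_gt ha0) n h0 h1)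
    (ne_of_gt (besselJ_zero_pos a ha0 ha))

lemma besselJ_neg_order (k : ℤ) (a : ℝ) : besselJ (-k) a = besselJ k (-a) := by
  rw [besselJ, besselJ]
  congr 1
  apply intervalIntegral.integral_congr
  intro t _
  push_cast
  rw [show (-(k:ℝ)) * t - a * Real.sin t = -((k:ℝ) * t - (-a) * Real.sin t) by ring,
    Real.cos_neg]

lemma besselJ_neg_arg (k : ℤ) (a : ℝ) : besselJ k (-a) = (-1:ℝ)^k * besselJ k a := by
  have h := intervalIntegral.integral_comp_sub_left (a := (0:ℝ)) (b := π)
      (fun x => Real.cos ((k:ℝ) * x - (-a) * Real.sin x)) π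
  rw [sub_self, sub_zero] at h
  have h2 : (∫ t in (0:ℝ)..π, Real.cos ((k:ℝ) * (π - t) - (-a) * Real.sin (π - t)))
      = ∫ t in (0:ℝ)..π, (-1:ℝ)^k * Real.cos ((k:ℝ) * t - a * Real.sin t) := by
    apply intervalIntegral.integral_congr
    intro t _
    show Real.cos ((k:ℝ) * (π - t) - (-a) * Real.sin (π - t))
        = (-1:ℝ)^k * Real.cos ((k:ℝ) * t - a * Real.sin t)
    rw [Real.sin_pi_sub]
    rw [show (k:ℝ) * (π - t) - (-a) * Real.sin t = (k:ℝ) * π - ((k:ℝ) * t - a * Real.sin t)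
      by ring]
    exact Real.cos_int_mul_pi_sub _ k
  rw [besselJ, besselJ, ← h, h2, intervalIntegral.integral_const_mul]
  ring

lemma abs_besselJ_neg_order (k : ℤ) (a : ℝ) : |besselJ (-k) a| = |besselJ k a| := by
  rw [besselJ_neg_order, abs_besselJ_neg_arg]

theorem besselJ_abs_sorting (a : ℝ) (ha0 : 0 < |a|) (ha : |a| ≤ π / 2)
    (k l : ℤ) (hk : 1 ≤ |k|) (hkl : |k| < |l|) :
    |besselJ k a| > |besselJ l a| := by
  have habs : ∀ m : ℤ, |besselJ m a| = |besselJ (|m|) (|a|)| := by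
    intro m
    have h1 : |besselJ m a| = |besselJ (|m|) a| := by
      rcases abs_choice m with h | h
      · rw [h]
      · rw [h, abs_besselJ_neg_order]
    have h2 : |besselJ (|m|) a| = |besselJ (|m|) (|a|)| := by
      rcases abs_choice a with h | h
      · rw [h]
      · rw [h, abs_besselJ_neg_arg]
    rw [h1, h2]
  rw [habs k, habs l]
  have hd := besselJ_decay |a| ha0 ha |k| hk |l| (by omega)
  have hne := besselJ_nonzero |a| ha0 ha |k| hk
  have hb : 0 < |besselJ (|k|) (|a|)| := abs_pos.mpr hne
  have hk1 : (2:ℝ) ≤ ((|k|:ℤ):ℝ) + 1 := by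
    have : (1:ℝ) ≤ ((|k|:ℤ):ℝ) := by exact_mod_cast hk
    linarith
  have hr1 : |a| / (((|k|:ℤ):ℝ) + 1) < 1 := by
    rw [div_lt_one (by linarith)]
    have h4 : π < 3.15 := Real.pi_lt_d2
    linarith
  calc |besselJ (|l|) (|a|)| ≤ |a| / (((|k|:ℤ):ℝ) + 1) * |besselJ (|k|) (|a|)| := hd
    _ < 1 * |besselJ (|k|) (|a|)| := mul_lt_mul_of_pos_right hr1 hb
    _ = |besselJ (|k|) (|a|)| := one_mul _
end

section
/- (Amplitude bound under SIREN-style initialization.) Let n ≥ 1, let ω, φ, b, c ∈ ℝ^n, and let a ∈ ℝ^{n×n} with rows a_1, …, a_n. Assume 0 < |a_{ij}| ≤ √(6/n) for all i, j and |c_i| ≤ √(6/n) for all i. Then for every k ∈ ℤ^n, both |∑_{i=1}^n c_i·α_k(a_i)·sin(∑_j k_j φ_j + b_i)| and |∑_{i=1}^n c_i·α_k(a_i)·cos(∑_j k_j φ_j + b_i)| are strictly less than √(6n)·(3/(2n))^{(|k_1|+…+|k_n|)/2} / (|k_1|!·…·|k_n|!). -/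
open Real MeasureTheory intervalIntegral

noncomputable def bI (k : ℤ) (a : ℝ) : ℝ :=
  ∫ t in (0:ℝ)..π, Real.cos (k * t - a * Real.sin t)

lemma bI_cont_integrand (k : ℤ) (a : ℝ) :
    Continuous fun t : ℝ => Real.cos ((k : ℝ) * t - a * Real.sin t) := by fun_prop

lemma bI_hasDerivAt (k : ℤ) (a : ℝ) :
    HasDerivAt (bI k)
      (∫ t in (0:ℝ)..π, Real.sin t * Real.sin ((k:ℝ) * t - a * Real.sin t)) a := by
  have h := intervalIntegral.hasDerivAt_integral_of_dominated_loc_of_deriv_le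
    (F := fun x t => Real.cos ((k:ℝ) * t - x * Real.sin t))
    (F' := fun x t => Real.sin t * Real.sin ((k:ℝ) * t - x * Real.sin t))
    (bound := fun _ => (1:ℝ)) (μ := volume) (a := (0:ℝ)) (b := π) (x₀ := a)
    (s := Metric.ball a 1) (Metric.ball_mem_nhds a one_pos)
    (Filter.Eventually.of_forall fun x => (bI_cont_integrand k x).aestronglyMeasurable)
    ((bI_cont_integrand k a).intervalIntegrable _ _)
    ((by fun_prop : Continuous fun t : ℝ => Real.sin t * Real.sin ((k:ℝ) * t - a * Real.sin t)).aestronglyMeasurable)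
    (Filter.Eventually.of_forall fun t _ x _ => by
      rw [Real.norm_eq_abs, abs_mul]
      exact mul_le_one₀ (abs_sin_le_one t) (abs_nonneg _) (abs_sin_le_one _))
    intervalIntegrable_const
    (Filter.Eventually.of_forall fun t _ x _ => by
      have h1 : HasDerivAt (fun x : ℝ => (k:ℝ) * t - x * Real.sin t) (-Real.sin t) x := by
        simpa using ((hasDerivAt_id x).mul_const (Real.sin t)).const_sub ((k:ℝ) * t)
      have := h1.cos
      exact this.congr_deriv (by ring))
  exact h.2

lemma trig_id1 (x t : ℝ) : Real.sin t * Real.sin x = (Real.cos (x - t) - Real.cos (x + t)) / 2 := by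
  rw [Real.cos_sub, Real.cos_add]; ring

lemma trig_id2 (x t : ℝ) : Real.cos t * Real.cos x = (Real.cos (x - t) + Real.cos (x + t)) / 2 := by
  rw [Real.cos_sub, Real.cos_add]; ring

lemma arg_sub (k : ℤ) (a t : ℝ) :
    ((k - 1 : ℤ) : ℝ) * t - a * Real.sin t = ((k:ℝ) * t - a * Real.sin t) - t := by
  push_cast; ring

lemma arg_add (k : ℤ) (a t : ℝ) :
    ((k + 1 : ℤ) : ℝ) * t - a * Real.sin t = ((k:ℝ) * t - a * Real.sin t) + t := by
  push_cast; ring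

lemma bI_deriv (k : ℤ) (a : ℝ) :
    HasDerivAt (bI k) ((bI (k-1) a - bI (k+1) a) / 2) a := by
  have h := bI_hasDerivAt k a
  convert h using 1
  have hint : ∀ m : ℤ, IntervalIntegrable
      (fun t => Real.cos ((m:ℝ) * t - a * Real.sin t)) volume 0 π :=
    fun m => (bI_cont_integrand m a).intervalIntegrable _ _
  have : (∫ t in (0:ℝ)..π, Real.sin t * Real.sin ((k:ℝ) * t - a * Real.sin t))
      = ∫ t in (0:ℝ)..π, (Real.cos (((k-1:ℤ):ℝ) * t - a * Real.sin t)
          - Real.cos (((k+1:ℤ):ℝ) * t - a * Real.sin t)) / 2 := by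
    apply intervalIntegral.integral_congr
    intro t _
    simp only [arg_sub, arg_add, ← trig_id1]
  rw [this]
  unfold bI
  rw [intervalIntegral.integral_div, intervalIntegral.integral_sub (hint _) (hint _)]

lemma bI_parts (k : ℤ) (a : ℝ) :
    (k:ℝ) * bI k a = a * ((bI (k-1) a + bI (k+1) a) / 2) := by
  have hint : ∀ m : ℤ, IntervalIntegrable
      (fun t => Real.cos ((m:ℝ) * t - a * Real.sin t)) volume 0 π :=
    fun m => (bI_cont_integrand m a).intervalIntegrable _ _
  have key : (∫ t in (0:ℝ)..π,
      Real.cos ((k:ℝ) * t - a * Real.sin t) * ((k:ℝ) - a * Real.cos t)) = 0 := by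
    have hd : ∀ t ∈ Set.uIcc (0:ℝ) π, HasDerivAt (fun t => Real.sin ((k:ℝ) * t - a * Real.sin t))
        (Real.cos ((k:ℝ) * t - a * Real.sin t) * ((k:ℝ) - a * Real.cos t)) t := by
      intro t _
      have h1 : HasDerivAt (fun t : ℝ => (k:ℝ) * t - a * Real.sin t)
          ((k:ℝ) - a * Real.cos t) t := by
        exact (((hasDerivAt_id t).const_mul (k:ℝ)).sub ((Real.hasDerivAt_sin t).const_mul a)).congr_deriv (by simp)
      exact h1.sin
    rw [intervalIntegral.integral_eq_sub_of_hasDerivAt hd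
      ((by fun_prop : Continuous fun t : ℝ =>
        Real.cos ((k:ℝ) * t - a * Real.sin t) * ((k:ℝ) - a * Real.cos t)).intervalIntegrable _ _)]
    simp [Real.sin_int_mul_pi]
  have expand : (∫ t in (0:ℝ)..π,
      Real.cos ((k:ℝ) * t - a * Real.sin t) * ((k:ℝ) - a * Real.cos t))
      = (k:ℝ) * bI k a - a * ((bI (k-1) a + bI (k+1) a) / 2) := by
    have : ∀ t ∈ Set.uIcc (0:ℝ) π, Real.cos ((k:ℝ) * t - a * Real.sin t) * ((k:ℝ) - a * Real.cos t)
        = (k:ℝ) * Real.cos ((k:ℝ) * t - a * Real.sin t)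
          - a * ((Real.cos (((k-1:ℤ):ℝ) * t - a * Real.sin t)
            + Real.cos (((k+1:ℤ):ℝ) * t - a * Real.sin t)) / 2) := by
      intro t _
      simp only [arg_sub, arg_add, ← trig_id2]
      ring
    rw [intervalIntegral.integral_congr this]
    unfold bI
    rw [intervalIntegral.integral_sub ((Continuous.intervalIntegrable (by fun_prop) _ _))
        ((Continuous.intervalIntegrable (by fun_prop) _ _)),
      intervalIntegral.integral_const_mul, intervalIntegral.integral_const_mul,
      intervalIntegral.integral_div, intervalIntegral.integral_add (hint _) (hint _)]
  rw [expand] at key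
  linarith

lemma bI_continuous (k : ℤ) : Continuous (bI k) :=
  continuous_iff_continuousAt.2 fun a => (bI_deriv k a).continuousAt

lemma pow_mul_bI_hasDerivAt (m : ℕ) (a : ℝ) :
    HasDerivAt (fun x : ℝ => x ^ (m+1) * bI (m+1) x) (a ^ (m+1) * bI m a) a := by
  have h := (hasDerivAt_pow (m+1) a).mul (bI_deriv ((m:ℤ)+1) a)
  have e1 : ((m:ℤ) + 1 - 1) = (m:ℤ) := by ring
  have e2 : ((m:ℤ) + 1 + 1) = ((m:ℤ) + 2) := by ring
  rw [e1, e2] at h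
  have hp := bI_parts ((m:ℤ)+1) a
  rw [e1, e2] at hp
  push_cast at hp
  refine h.congr_deriv (Eq.symm ?_)
  push_cast
  have hs : a ^ m * a = a ^ (m+1) := (pow_succ a m).symm
  have e3 : ((m:ℝ)+1) * a ^ m * bI ((m:ℤ)+1) a
      = a ^ m * (((m:ℝ)+1) * bI ((m:ℤ)+1) a) := by ring
  rw [e3, hp, ← hs]
  ring

lemma bI_rec (m : ℕ) (a : ℝ) :
    a ^ (m+1) * bI (m+1) a = ∫ t in (0:ℝ)..a, t ^ (m+1) * bI m t := by
  have hd : ∀ t ∈ Set.uIcc (0:ℝ) a,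
      HasDerivAt (fun x : ℝ => x ^ (m+1) * bI (m+1) x) (t ^ (m+1) * bI m t) t :=
    fun t _ => pow_mul_bI_hasDerivAt m t
  have hint : IntervalIntegrable (fun t : ℝ => t ^ (m+1) * bI m t) volume 0 a :=
    (Continuous.mul (continuous_pow (m+1)) (bI_continuous m)).intervalIntegrable _ _
  rw [intervalIntegral.integral_eq_sub_of_hasDerivAt hd hint]
  simp

lemma bI_zero_lt (a : ℝ) (ha : 0 < a) : |bI 0 a| < π := by
  have hπ : (0:ℝ) < π := Real.pi_pos
  -- find witness c ∈ Icc 0 π with cos (a * sin c) < 1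
  obtain ⟨c, hc, hcos⟩ : ∃ c ∈ Set.Icc (0:ℝ) π, Real.cos (a * Real.sin c) < 1 := by
    rcases le_or_gt a π with hle | hgt
    · refine ⟨π/2, ⟨by positivity, by linarith⟩, ?_⟩
      rw [Real.sin_pi_div_two, mul_one]
      have := Real.strictAntiOn_cos ⟨le_refl 0, hπ.le⟩ ⟨ha.le, hle⟩ ha
      simpa using this
    · have hcont : ContinuousOn Real.sin (Set.Icc 0 (π/2)) := Real.continuous_sin.continuousOn
      have hmem : π / a ∈ Set.Icc (Real.sin 0) (Real.sin (π/2)) := by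
        rw [Real.sin_zero, Real.sin_pi_div_two]
        constructor
        · positivity
        · rw [div_le_one (by linarith)]; linarith
      obtain ⟨c, hc, hsc⟩ := intermediate_value_Icc (by positivity : (0:ℝ) ≤ π/2) hcont hmem
      refine ⟨c, ⟨hc.1, le_trans hc.2 (by linarith)⟩, ?_⟩
      rw [hsc, mul_div_cancel₀ _ (by linarith : a ≠ 0), Real.cos_pi]
      linarith
  have habs : ∀ t : ℝ, Real.cos (((0:ℤ):ℝ) * t - a * Real.sin t) = Real.cos (a * Real.sin t) := by
    intro t; push_cast; rw [zero_mul, zero_sub, Real.cos_neg]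
  rw [abs_lt]
  constructor
  · have h := intervalIntegral.integral_lt_integral_of_continuousOn_of_le_of_exists_lt
      (f := fun _ : ℝ => (-1:ℝ)) (g := fun t => Real.cos (((0:ℤ):ℝ) * t - a * Real.sin t))
      hπ continuousOn_const (by fun_prop)
      (fun t _ => Real.neg_one_le_cos _) ⟨0, ⟨le_refl 0, hπ.le⟩, by
        simp only [habs]; simp [Real.sin_zero]⟩
    rw [intervalIntegral.integral_const] at h
    unfold bI
    simp only [smul_eq_mul, sub_zero] at h
    linarith
  · have h := intervalIntegral.integral_lt_integral_of_continuousOn_of_le_of_exists_lt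
      (f := fun t => Real.cos (((0:ℤ):ℝ) * t - a * Real.sin t)) (g := fun _ : ℝ => (1:ℝ))
      hπ (by fun_prop) continuousOn_const
      (fun t _ => Real.cos_le_one _) ⟨c, hc, by simp only [habs]; exact hcos⟩
    rw [intervalIntegral.integral_const] at h
    unfold bI
    simp only [smul_eq_mul, sub_zero, mul_one] at h
    exact h

lemma bI_lt (m : ℕ) : ∀ a : ℝ, 0 < a → |bI m a| < π * (a/2)^m / m.factorial := by
  induction m with
  | zero =>
    intro a ha
    simpa using bI_zero_lt a ha
  | succ m ih =>
    intro a ha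
    have hrec := bI_rec m a
    have h1 : |a ^ (m+1) * bI (m+1) a| ≤ ∫ t in (0:ℝ)..a, |t ^ (m+1) * bI m t| := by
      rw [hrec]
      exact intervalIntegral.abs_integral_le_integral_abs ha.le
    have h2 : (∫ t in (0:ℝ)..a, |t ^ (m+1) * bI m t|)
        < ∫ t in (0:ℝ)..a, (π / (2^m * m.factorial)) * t ^ (2*m+1) := by
      apply intervalIntegral.integral_lt_integral_of_continuousOn_of_le_of_exists_lt ha
      · exact ((continuous_pow (m+1)).mul (bI_continuous m)).abs.continuousOn
      · fun_prop
      · intro t ht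
        have ht0 : 0 < t := ht.1
        have hb := ih t ht0
        rw [abs_mul, abs_pow, abs_of_pos ht0]
        calc t^(m+1) * |bI m t| ≤ t^(m+1) * (π * (t/2)^m / m.factorial) := by
              apply mul_le_mul_of_nonneg_left hb.le (by positivity)
          _ = (π / (2^m * m.factorial)) * t ^ (2*m+1) := by
              have hf : ((m.factorial:ℝ)) ≠ 0 := by positivity
              rw [div_pow]
              field_simp
              ring
      · refine ⟨a, ⟨ha.le, le_refl a⟩, ?_⟩
        have hb := ih a ha
        rw [abs_mul, abs_pow, abs_of_pos ha]
        calc a^(m+1) * |bI m a| < a^(m+1) * (π * (a/2)^m / m.factorial) := by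
              apply mul_lt_mul_of_pos_left hb (by positivity)
          _ = (π / (2^m * m.factorial)) * a ^ (2*m+1) := by
              have hf : ((m.factorial:ℝ)) ≠ 0 := by positivity
              rw [div_pow]
              field_simp
              ring
    have h3 : (∫ t in (0:ℝ)..a, (π / (2^m * m.factorial)) * t ^ (2*m+1))
        = (π * (a/2)^(m+1) / (m+1).factorial) * a ^ (m+1) := by
      rw [intervalIntegral.integral_const_mul, integral_pow]
      rw [Nat.factorial_succ, div_pow]
      push_cast
      have hf : ((m.factorial:ℝ)) ≠ 0 := by positivity
      field_simp
      ring
    have h4 : a ^ (m+1) * |bI (m+1) a| < (π * (a/2)^(m+1) / (m+1).factorial) * a ^ (m+1) := by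
      calc a ^ (m+1) * |bI (m+1) a| = |a ^ (m+1) * bI (m+1) a| := by
            rw [abs_mul, abs_pow, abs_of_pos ha]
        _ ≤ _ := h1
        _ < _ := h2
        _ = _ := h3
    have hpow : (0:ℝ) < a ^ (m+1) := by positivity
    rw [mul_comm] at h4
    exact lt_of_mul_lt_mul_right h4 hpow.le

lemma bI_flip (k : ℤ) (a : ℝ) : bI k a = (-1:ℝ)^k * bI k (-a) := by
  have h := intervalIntegral.integral_comp_sub_left (a := (0:ℝ)) (b := π)
    (fun t => Real.cos ((k:ℝ) * t - a * Real.sin t)) π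
  rw [sub_self, sub_zero] at h
  unfold bI
  rw [← h, ← intervalIntegral.integral_const_mul]
  apply intervalIntegral.integral_congr
  intro t _
  simp only
  have e : (k:ℝ) * (π - t) - a * Real.sin (π - t)
      = (k:ℝ) * π - ((k:ℝ) * t + a * Real.sin t) := by
    rw [Real.sin_pi_sub]; ring
  rw [e, Real.cos_int_mul_pi_sub]
  congr 2
  ring

lemma bI_neg_order (k : ℤ) (a : ℝ) : bI k (-a) = bI (-k) a := by
  unfold bI
  apply intervalIntegral.integral_congr
  intro t _
  simp only
  have e : ((-k : ℤ):ℝ) * t - a * Real.sin t = -((k:ℝ) * t - (-a) * Real.sin t) := by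
    push_cast; ring
  rw [e, Real.cos_neg]

lemma abs_bI_flip (k : ℤ) (a : ℝ) : |bI k (-a)| = |bI k a| := by
  rw [bI_flip k a, abs_mul, abs_neg_one_zpow, one_mul]

lemma abs_bI (k : ℤ) (a : ℝ) : |bI k a| = |bI k.natAbs (|a|)| := by
  rcases le_or_gt 0 a with ha | ha
  · rcases Int.natAbs_eq k with hk | hk
    · rw [abs_of_nonneg ha, ← hk]
    · rw [abs_of_nonneg ha, hk, ← abs_bI_flip, bI_neg_order, neg_neg]
      simp
  · rcases Int.natAbs_eq k with hk | hk
    · rw [abs_of_neg ha, ← abs_bI_flip k a, ← hk]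
    · rw [abs_of_neg ha, hk, ← abs_bI_flip, bI_neg_order, neg_neg, abs_bI_flip]
      simp

lemma besselJ_abs_lt {k : ℤ} {a : ℝ} (ha : a ≠ 0) :
    |besselJ k a| < (|a|/2) ^ k.natAbs / (k.natAbs.factorial : ℝ) := by
  have hπ : (0:ℝ) < π := Real.pi_pos
  have h := bI_lt k.natAbs |a| (abs_pos.2 ha)
  rw [← abs_bI] at h
  have hJ : besselJ k a = (1/π) * bI k a := rfl
  rw [hJ, abs_mul, abs_of_pos (by positivity : (0:ℝ) < 1/π)]
  calc (1/π) * |bI k a| < (1/π) * (π * (|a|/2) ^ k.natAbs / k.natAbs.factorial) := by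
        exact mul_lt_mul_of_pos_left h (by positivity)
    _ = (|a|/2) ^ k.natAbs / (k.natAbs.factorial : ℝ) := by
        field_simp

lemma sqrt_six_div_two (n : ℕ) (hn : 1 ≤ n) :
    Real.sqrt (6 / (n:ℝ)) / 2 = Real.sqrt (3 / (2 * (n:ℝ))) := by
  have hn0 : (n:ℝ) ≠ 0 := Nat.cast_ne_zero.2 (by omega)
  have e : (3 / (2 * (n:ℝ))) = (6 / (n:ℝ)) / 4 := by field_simp; ring
  rw [e, Real.sqrt_div (by positivity) 4,
    show (4:ℝ) = 2^2 by norm_num, Real.sqrt_sq (by norm_num)]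

lemma amp_lt {n : ℕ} (hn : 1 ≤ n) (v : Fin n → ℝ) (k : Fin n → ℤ)
    (hv : ∀ j, 0 < |v j| ∧ |v j| ≤ Real.sqrt (6 / (n:ℝ))) :
    |amp v k| < (3 / (2 * (n:ℝ))) ^ ((∑ i, ((k i).natAbs : ℝ)) / 2) /
      ∏ i, ((k i).natAbs.factorial : ℝ) := by
  have hn0 : (0:ℝ) < (n:ℝ) := by exact_mod_cast Nat.pos_of_ne_zero (by omega)
  have hx : (0:ℝ) < 3 / (2 * (n:ℝ)) := by positivity
  set y := Real.sqrt (3 / (2 * (n:ℝ))) with hy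
  have hy0 : 0 < y := Real.sqrt_pos.2 hx
  set g : Fin n → ℝ := fun j => y ^ (k j).natAbs / ((k j).natAbs.factorial : ℝ) with hg
  have hg0 : ∀ j, 0 < g j := fun j => by positivity
  have hlt : ∀ j, |besselJ (k j) (v j)| < g j := by
    intro j
    have h1 := besselJ_abs_lt (k := k j) (a := v j) (abs_pos.1 (hv j).1)
    refine h1.trans_le ?_
    apply div_le_div_of_nonneg_right ?_ (by positivity)
    · apply pow_le_pow_left₀ (by positivity)
      rw [hy, ← sqrt_six_div_two n hn]
      exact div_le_div_of_nonneg_right (hv j).2 (by norm_num)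
  have habs : |amp v k| = ∏ j, |besselJ (k j) (v j)| := by
    rw [amp, Finset.abs_prod]
  have j0 : Fin n := ⟨0, by omega⟩
  have hprod : (∏ j, |besselJ (k j) (v j)|) < ∏ j, g j := by
    rw [← Finset.mul_prod_erase Finset.univ _ (Finset.mem_univ j0),
      ← Finset.mul_prod_erase Finset.univ g (Finset.mem_univ j0)]
    calc |besselJ (k j0) (v j0)| * ∏ j ∈ Finset.univ.erase j0, |besselJ (k j) (v j)|
        ≤ |besselJ (k j0) (v j0)| * ∏ j ∈ Finset.univ.erase j0, g j := by
          apply mul_le_mul_of_nonneg_left ?_ (abs_nonneg _)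
          exact Finset.prod_le_prod (fun j _ => abs_nonneg _) (fun j _ => (hlt j).le)
      _ < g j0 * ∏ j ∈ Finset.univ.erase j0, g j := by
          apply mul_lt_mul_of_pos_right (hlt j0)
          exact Finset.prod_pos fun j _ => hg0 j
  have hgprod : (∏ j, g j) = (3 / (2 * (n:ℝ))) ^ ((∑ i, ((k i).natAbs : ℝ)) / 2) /
      ∏ i, ((k i).natAbs.factorial : ℝ) := by
    rw [hg]
    rw [Finset.prod_div_distrib, Finset.prod_pow_eq_pow_sum]
    congr 1
    rw [hy, Real.sqrt_eq_rpow, ← Real.rpow_natCast ((3 / (2 * (n:ℝ))) ^ ((1:ℝ)/2)),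
      ← Real.rpow_mul hx.le]
    congr 1
    push_cast
    ring
  rw [habs, ← hgprod]
  exact hprod

theorem siren_amplitude_bound (n : ℕ) (hn : 1 ≤ n)
    (ω φ b c : Fin n → ℝ) (a : Fin n → Fin n → ℝ)
    (ha : ∀ i j, 0 < |a i j| ∧ |a i j| ≤ Real.sqrt (6 / n))
    (hc : ∀ i, |c i| ≤ Real.sqrt (6 / n)) (k : Fin n → ℤ) :
    |∑ i, c i * (amp (a i) k * Real.sin ((∑ j, (k j : ℝ) * φ j) + b i))| <
      Real.sqrt (6 * n) *
        ((3 / (2 * n) : ℝ) ^ ((∑ i, ((k i).natAbs : ℝ)) / 2) /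
          ∏ i, ((k i).natAbs.factorial : ℝ)) ∧
    |∑ i, c i * (amp (a i) k * Real.cos ((∑ j, (k j : ℝ) * φ j) + b i))| <
      Real.sqrt (6 * n) *
        ((3 / (2 * n) : ℝ) ^ ((∑ i, ((k i).natAbs : ℝ)) / 2) /
          ∏ i, ((k i).natAbs.factorial : ℝ)) := by
  have hn0 : (0:ℝ) < (n:ℝ) := by exact_mod_cast Nat.pos_of_ne_zero (by omega)
  set B : ℝ := (3 / (2 * n) : ℝ) ^ ((∑ i, ((k i).natAbs : ℝ)) / 2) /
    ∏ i, ((k i).natAbs.factorial : ℝ) with hB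
  have hB0 : 0 < B := by
    apply div_pos (Real.rpow_pos_of_pos (by positivity) _)
    exact Finset.prod_pos fun i _ => by positivity
  have hs0 : (0:ℝ) < Real.sqrt (6 / n) := Real.sqrt_pos.2 (by positivity)
  have hampB : ∀ i, |amp (a i) k| < B := fun i => amp_lt hn (a i) k (ha i)
  have hsqrt : Real.sqrt (6 * n) = (n:ℝ) * Real.sqrt (6 / n) := by
    rw [show (n:ℝ) * Real.sqrt (6 / n) = Real.sqrt ((n:ℝ)^2) * Real.sqrt (6 / n) by
        rw [Real.sqrt_sq hn0.le],
      ← Real.sqrt_mul (by positivity)]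
    congr 1
    field_simp
  have key : ∀ T : Fin n → ℝ, (∀ i, |T i| ≤ 1) →
      |∑ i, c i * (amp (a i) k * T i)| < Real.sqrt (6 * n) * B := by
    intro T hT
    calc |∑ i, c i * (amp (a i) k * T i)| ≤ ∑ i, |c i * (amp (a i) k * T i)| :=
          Finset.abs_sum_le_sum_abs _ _
      _ < ∑ _i : Fin n, Real.sqrt (6 / n) * B := by
          apply Finset.sum_lt_sum_of_nonempty (Finset.univ_nonempty_iff.2 ⟨⟨0, by omega⟩⟩)
          intro i _
          rw [abs_mul, abs_mul]
          calc |c i| * (|amp (a i) k| * |T i|)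
              ≤ Real.sqrt (6 / n) * (|amp (a i) k| * |T i|) := by
                apply mul_le_mul_of_nonneg_right (hc i) (by positivity)
            _ ≤ Real.sqrt (6 / n) * |amp (a i) k| := by
                apply mul_le_mul_of_nonneg_left ?_ hs0.le
                calc |amp (a i) k| * |T i| ≤ |amp (a i) k| * 1 :=
                      mul_le_mul_of_nonneg_left (hT i) (abs_nonneg _)
                  _ = |amp (a i) k| := mul_one _
            _ < Real.sqrt (6 / n) * B := mul_lt_mul_of_pos_left (hampB i) hs0
      _ = Real.sqrt (6 * n) * B := by
          rw [Finset.sum_const, Finset.card_univ, Fintype.card_fin, nsmul_eq_mul, hsqrt]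
          ring
  exact ⟨key _ fun i => Real.abs_sin_le_one _, key _ fun i => Real.abs_cos_le_one _⟩
end
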